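/- arXiv:2309.10558 — 3 statements merged into one kernel-verified Lean document; each statement's English description precedes it below -/
import Mathlib

section
/- For every positive integer c, every edge-ordered bigraph G on n vertices has at most 2cn edges that are c-non-leaning in G. -/
set_option maxHeartbeats 1000000

/-- An edge-ordered graph: a finite simple graph together with an injective
real labeling of its edges (inducing a linear order on the edge set). -/
structure EOGraph (V : Type) [Fintype V] where
  graph : SimpleGraph V
  label : Sym2 V → ℝ
  inj : ∀ e ∈ graph.edgeSet, ∀ f ∈ graph.edgeSet, label e = label f → e = f

/-- `G` contains `H`: an injective, adjacency-preserving, edge-order-respecting map. -/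
def EOContains {V W : Type} [Fintype V] [Fintype W] (G : EOGraph V) (H : EOGraph W) : Prop :=
  ∃ f : W → V, Function.Injective f ∧
    (∀ a b, H.graph.Adj a b → G.graph.Adj (f a) (f b)) ∧
    ∀ e ∈ H.graph.edgeSet, ∀ e' ∈ H.graph.edgeSet,
      H.label e < H.label e' → G.label (Sym2.map f e) < G.label (Sym2.map f e')

/-- The Turán number `ex_<(n, H)`: the maximum number of edges of an
edge-ordered graph on `n` vertices avoiding `H`. -/
noncomputable def exLT {W : Type} [Fintype W] (n : ℕ) (H : EOGraph W) : ℕ :=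
  sSup {m | ∃ G : EOGraph (Fin n), ¬ EOContains G H ∧ G.graph.edgeSet.ncard = m}

/-- The reverse of an edge-ordered graph: same graph, reversed edge order. -/
def EOGraph.reverse {V : Type} [Fintype V] (G : EOGraph V) : EOGraph V where
  graph := G.graph
  label := fun e => - G.label e
  inj := fun e he f hf h => G.inj e he f hf (neg_inj.mp h)

/-- Two edges (as elements of `Sym2 V`) are adjacent if they share a vertex. -/
def EdgesAdjacent {V : Type} (e f : Sym2 V) : Prop := ∃ v, v ∈ e ∧ v ∈ f

/-- `e` and `f` are consecutive edges of `G`: `e < f` with no edge strictly in between. -/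
def Consecutive {V : Type} [Fintype V] (G : EOGraph V) (e f : Sym2 V) : Prop :=
  e ∈ G.graph.edgeSet ∧ f ∈ G.graph.edgeSet ∧ G.label e < G.label f ∧
    ¬ ∃ g ∈ G.graph.edgeSet, G.label e < G.label g ∧ G.label g < G.label f

/-- A semi-caterpillar: the underlying graph is a tree with at least one edge, and any
pair of consecutive edges is adjacent or directly connected by an edge larger than both. -/
def IsSemiCaterpillar {V : Type} [Fintype V] (G : EOGraph V) : Prop :=
  G.graph.IsTree ∧ G.graph.edgeSet.Nonempty ∧
  ∀ e f, Consecutive G e f →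
    EdgesAdjacent e f ∨
    ∃ u v, s(u, v) ∈ G.graph.edgeSet ∧ u ∈ e ∧ v ∈ f ∧
      G.label e < G.label s(u, v) ∧ G.label f < G.label s(u, v)

/-- The order chromatic number of `G` is at most `k`: there is a simple graph `H` with
chromatic number at most `k` all of whose edge-orderings contain `G`. -/
def OrderChromAtMost {V : Type} [Fintype V] (G : EOGraph V) (k : ℕ) : Prop :=
  ∃ (m : ℕ) (H : SimpleGraph (Fin m)), H.chromaticNumber ≤ (k : ℕ∞) ∧
    ∀ K : EOGraph (Fin m), K.graph = H → EOContains K G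

/-- The order chromatic number of `G` equals 2. -/
def HasOrderChrom2 {V : Type} [Fintype V] (G : EOGraph V) : Prop :=
  OrderChromAtMost G 2 ∧ ¬ OrderChromAtMost G 1

/-- A vertex is close if the edges incident to it form an interval in the edge order. -/
def CloseVertex {V : Type} [Fintype V] (G : EOGraph V) (v : V) : Prop :=
  ∀ e ∈ G.graph.edgeSet, ∀ f ∈ G.graph.edgeSet, ∀ g ∈ G.graph.edgeSet,
    v ∈ e → v ∈ g → G.label e ≤ G.label f → G.label f ≤ G.label g → v ∈ f

/-- An edge-ordered bigraph: an edge-ordered graph with a proper 2-coloring of the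
vertices into left (`false`) and right (`true`) vertices. -/
structure EOBigraph (V : Type) [Fintype V] where
  toEOGraph : EOGraph V
  side : V → Bool
  proper : ∀ u v, toEOGraph.graph.Adj u v → side u ≠ side v

/-- A right caterpillar: an edge-ordered bigraph whose underlying edge-ordered graph is a
semi-caterpillar and all of whose right vertices are close. -/
def IsRightCaterpillar {V : Type} [Fintype V] (B : EOBigraph V) : Prop :=
  IsSemiCaterpillar B.toEOGraph ∧ ∀ v, B.side v = true → CloseVertex B.toEOGraph v

/-- Containment of edge-ordered bigraphs: additionally sides must be preserved. -/
def BContains {V W : Type} [Fintype V] [Fintype W] (G : EOBigraph V) (H : EOBigraph W) : Prop :=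
  ∃ f : W → V, Function.Injective f ∧
    (∀ a b, H.toEOGraph.graph.Adj a b → G.toEOGraph.graph.Adj (f a) (f b)) ∧
    (∀ e ∈ H.toEOGraph.graph.edgeSet, ∀ e' ∈ H.toEOGraph.graph.edgeSet,
      H.toEOGraph.label e < H.toEOGraph.label e' →
        G.toEOGraph.label (Sym2.map f e) < G.toEOGraph.label (Sym2.map f e')) ∧
    ∀ a, G.side (f a) = H.side a

/-- Isomorphism of edge-ordered bigraphs. -/
def BIsoTo {V W : Type} [Fintype W] [Fintype V] (H : EOBigraph W) (G : EOBigraph V) : Prop :=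
  ∃ f : W ≃ V, (∀ a b, H.toEOGraph.graph.Adj a b ↔ G.toEOGraph.graph.Adj (f a) (f b)) ∧
    (∀ e ∈ H.toEOGraph.graph.edgeSet, ∀ e' ∈ H.toEOGraph.graph.edgeSet,
      (H.toEOGraph.label e < H.toEOGraph.label e' ↔
        G.toEOGraph.label (Sym2.map f e) < G.toEOGraph.label (Sym2.map f e'))) ∧
    ∀ a, G.side (f a) = H.side a

/-- Isomorphism of edge-ordered graphs. -/
def EOIsoTo {V W : Type} [Fintype W] [Fintype V] (H : EOGraph W) (G : EOGraph V) : Prop :=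
  ∃ f : W ≃ V, (∀ a b, H.graph.Adj a b ↔ G.graph.Adj (f a) (f b)) ∧
    ∀ e ∈ H.graph.edgeSet, ∀ e' ∈ H.graph.edgeSet,
      (H.label e < H.label e' ↔ G.label (Sym2.map f e) < G.label (Sym2.map f e'))

/-- The labeling of the path graph on `Fin k` in which the edge `{i, i+1}` gets label `w i`. -/
def pathLabel {k : ℕ} (w : Fin k → ℝ) : Sym2 (Fin k) → ℝ :=
  Sym2.lift ⟨fun i j => w (min i j), fun i j => by simp [min_comm]⟩

lemma pathGraph_edge_form {k : ℕ} {e : Sym2 (Fin k)}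
    (he : e ∈ (SimpleGraph.pathGraph k).edgeSet) :
    ∃ i j : Fin k, e = s(i, j) ∧ (i : ℕ) + 1 = (j : ℕ) := by
  induction e using Sym2.inductionOn with
  | hf a b =>
    rw [SimpleGraph.mem_edgeSet, SimpleGraph.pathGraph_adj] at he
    rcases he with h | h
    · exact ⟨a, b, rfl, h⟩
    · exact ⟨b, a, Sym2.eq_swap, h⟩

/-- The edge-ordered path on `k` vertices whose edge labels, listed along the path,
are `w 0, w 1, …, w (k-2)`. -/
def pathEO (k : ℕ) (w : Fin k → ℝ) (hw : Function.Injective w) : EOGraph (Fin k) where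
  graph := SimpleGraph.pathGraph k
  label := pathLabel w
  inj := by
    intro e he f hf hef
    obtain ⟨i, j, rfl, hij⟩ := pathGraph_edge_form he
    obtain ⟨i', j', rfl, hij'⟩ := pathGraph_edge_form hf
    have h1 : min i j = i := min_eq_left (Fin.le_def.mpr (by omega))
    have h2 : min i' j' = i' := min_eq_left (Fin.le_def.mpr (by omega))
    simp only [pathLabel, Sym2.lift_mk] at hef
    rw [h1, h2] at hef
    have hii : i = i' := hw hef
    have hjj : j = j' := Fin.ext (by omega)
    rw [hii, hjj]

/-- The edge-ordered path with natural-number labels. -/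
def pathEON (k : ℕ) (v : Fin k → ℕ) (hv : Function.Injective v) : EOGraph (Fin k) :=
  pathEO k (fun i => (v i : ℝ)) (fun a b h => hv (Nat.cast_injective h))

/-- The bipartition of the edge-ordered path `pathEON k v hv`; the starting vertex is a
right vertex iff `startRight` holds (right = `true`, left = `false`). -/
def pathEOBig (k : ℕ) (v : Fin k → ℕ) (hv : Function.Injective v) (startRight : Bool) :
    EOBigraph (Fin k) where
  toEOGraph := pathEON k v hv
  side := fun i => if i.val % 2 = 0 then startRight else !startRight
  proper := by
    intro a b hab
    have h : (SimpleGraph.pathGraph k).Adj a b := hab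
    rw [SimpleGraph.pathGraph_adj] at h
    have hpar : (a.val % 2 = 0) ↔ ¬ (b.val % 2 = 0) := by omega
    by_cases ha : a.val % 2 = 0 <;> by_cases hb : b.val % 2 = 0 <;>
      simp_all

def P4_213 : EOGraph (Fin 4) := pathEON 4 ![2,1,3,0] (by decide)
def P5_1342 : EOGraph (Fin 5) := pathEON 5 ![1,3,4,2,0] (by decide)
def P5_1432 : EOGraph (Fin 5) := pathEON 5 ![1,4,3,2,0] (by decide)
def P6_13254 : EOGraph (Fin 6) := pathEON 6 ![1,3,2,5,4,0] (by decide)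
def P6_21354 : EOGraph (Fin 6) := pathEON 6 ![2,1,3,5,4,0] (by decide)
def P6plus_13254 : EOBigraph (Fin 6) := pathEOBig 6 ![1,3,2,5,4,0] (by decide) true
def P6minus_13254 : EOBigraph (Fin 6) := pathEOBig 6 ![1,3,2,5,4,0] (by decide) false
def P5plus_2143 : EOBigraph (Fin 5) := pathEOBig 5 ![2,1,4,3,0] (by decide) true
def P5minus_2143 : EOBigraph (Fin 5) := pathEOBig 5 ![2,1,4,3,0] (by decide) false

/-- `B'` is an extension of `B`: it is obtained by adding new edges, each connecting an end
of the smallest edge `s(x,y)` of `B` to a new degree-1 vertex, all new edges being smaller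
than `s(x,y)`, and all new edges at the left end being smaller than those at the right end. -/
def IsExtensionOf {V' V : Type} [Fintype V'] [Fintype V]
    (B' : EOBigraph V') (B : EOBigraph V) : Prop :=
  ∃ (ι : V → V') (x y : V),
    Function.Injective ι ∧
    B.toEOGraph.graph.Adj x y ∧ B.side x = false ∧ B.side y = true ∧
    (∀ e ∈ B.toEOGraph.graph.edgeSet, B.toEOGraph.label s(x, y) ≤ B.toEOGraph.label e) ∧
    (∀ a b, B.toEOGraph.graph.Adj a b ↔ B'.toEOGraph.graph.Adj (ι a) (ι b)) ∧
    (∀ a, B'.side (ι a) = B.side a) ∧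
    (∀ e ∈ B.toEOGraph.graph.edgeSet, ∀ f ∈ B.toEOGraph.graph.edgeSet,
      (B.toEOGraph.label e < B.toEOGraph.label f ↔
        B'.toEOGraph.label (Sym2.map ι e) < B'.toEOGraph.label (Sym2.map ι f))) ∧
    (∀ w : V', w ∉ Set.range ι →
      (∃! u, B'.toEOGraph.graph.Adj w u) ∧
      (∀ u, B'.toEOGraph.graph.Adj w u → (u = ι x ∨ u = ι y) ∧
        B'.toEOGraph.label s(w, u) < B'.toEOGraph.label s(ι x, ι y))) ∧
    (∀ w w' : V', w ∉ Set.range ι → w' ∉ Set.range ι →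
      B'.toEOGraph.graph.Adj w (ι x) → B'.toEOGraph.graph.Adj w' (ι y) →
      B'.toEOGraph.label s(w, ι x) < B'.toEOGraph.label s(w', ι y))

/-- A bundled edge-ordered bigraph (on some `Fin n`). -/
structure BundledBigraph where
  n : ℕ
  big : EOBigraph (Fin n)

/-- `B` is (isomorphic to) `T₀`, the edge-ordered bigraph with one edge and two vertices. -/
def IsT0 {V : Type} [Fintype V] (B : EOBigraph V) : Prop :=
  Fintype.card V = 2 ∧ ∀ u v : V, u ≠ v → B.toEOGraph.graph.Adj u v

/-- `B` can be obtained (up to isomorphism) from `T₀` by a sequence of `i` extensions. -/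
def ReachedInSteps {V : Type} [Fintype V] (i : ℕ) (B : EOBigraph V) : Prop :=
  ∃ f : ℕ → BundledBigraph, IsT0 (f 0).big ∧ BIsoTo (f i).big B ∧
    ∀ j < i, IsExtensionOf (f (j+1)).big (f j).big

/-- The recursive depth of a right caterpillar: the minimum number of extension steps
needed to obtain it from `T₀`. -/
def HasRecursiveDepth {V : Type} [Fintype V] (B : EOBigraph V) (i : ℕ) : Prop :=
  ReachedInSteps i B ∧ ∀ j < i, ¬ ReachedInSteps j B

/-- An edge `e` (with left end `x` and right end `y`) is `c`-left-leaning: there are `c` edges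
at `x` and `c` edges at `y` with every edge of the latter set larger than every edge of the
former, but smaller than `e`. -/
def LeftLeaning {V : Type} [Fintype V] (c : ℕ) (G : EOBigraph V) (e : Sym2 V) : Prop :=
  ∃ x y : V, e = s(x, y) ∧ e ∈ G.toEOGraph.graph.edgeSet ∧
    G.side x = false ∧ G.side y = true ∧
    ∃ S S' : Finset (Sym2 V), S.card = c ∧ S'.card = c ∧
      (∀ f ∈ S, f ∈ G.toEOGraph.graph.edgeSet ∧ x ∈ f) ∧
      (∀ f ∈ S', f ∈ G.toEOGraph.graph.edgeSet ∧ y ∈ f) ∧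
      (∀ f ∈ S, ∀ f' ∈ S', G.toEOGraph.label f < G.toEOGraph.label f') ∧
      (∀ f' ∈ S', G.toEOGraph.label f' < G.toEOGraph.label e)

/-- An edge `e` (with left end `x` and right end `y`) is `c`-right-leaning. -/
def RightLeaning {V : Type} [Fintype V] (c : ℕ) (G : EOBigraph V) (e : Sym2 V) : Prop :=
  ∃ x y : V, e = s(x, y) ∧ e ∈ G.toEOGraph.graph.edgeSet ∧
    G.side x = false ∧ G.side y = true ∧
    ∃ S S' : Finset (Sym2 V), S.card = c ∧ S'.card = c ∧
      (∀ f ∈ S, f ∈ G.toEOGraph.graph.edgeSet ∧ x ∈ f) ∧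
      (∀ f ∈ S', f ∈ G.toEOGraph.graph.edgeSet ∧ y ∈ f) ∧
      (∀ f' ∈ S', ∀ f ∈ S, G.toEOGraph.label f' < G.toEOGraph.label f) ∧
      (∀ f ∈ S, G.toEOGraph.label f < G.toEOGraph.label e)

/-- The spanning sub-bigraph of `G` consisting of the edges satisfying `P`. -/
def bigraphRestrict {V : Type} [Fintype V] (G : EOBigraph V) (P : Sym2 V → Prop) :
    EOBigraph V where
  toEOGraph :=
    { graph := SimpleGraph.fromEdgeSet {e | e ∈ G.toEOGraph.graph.edgeSet ∧ P e}
      label := G.toEOGraph.label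
      inj := by
        intro e he f hf h
        rw [SimpleGraph.edgeSet_fromEdgeSet] at he hf
        exact G.toEOGraph.inj e he.1.1 f hf.1.1 h }
  side := G.side
  proper := by
    intro u v huv
    rw [SimpleGraph.fromEdgeSet_adj] at huv
    have h1 : s(u, v) ∈ G.toEOGraph.graph.edgeSet := huv.1.1
    exact G.proper u v ((SimpleGraph.mem_edgeSet _).mp h1)

/-- The spanning subgraph of the `c`-left-leaning edges. -/
def leftSub {V : Type} [Fintype V] (c : ℕ) (G : EOBigraph V) : EOBigraph V :=
  bigraphRestrict G (LeftLeaning c G)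

/-- The spanning subgraph of the `c`-right-leaning edges. -/
def rightSub {V : Type} [Fintype V] (c : ℕ) (G : EOBigraph V) : EOBigraph V :=
  bigraphRestrict G (RightLeaning c G)

/-- `G^{c-left}_i`: iteratively keep only `c`-left-leaning edges, `i` times. -/
def leftIter {V : Type} [Fintype V] (c i : ℕ) (G : EOBigraph V) : EOBigraph V :=
  (leftSub c)^[i] G

/-- `G^{c-right}_i`: iteratively keep only `c`-right-leaning edges, `i` times. -/
def rightIter {V : Type} [Fintype V] (c i : ℕ) (G : EOBigraph V) : EOBigraph V :=
  (rightSub c)^[i] G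

/-- The set of labels of edges incident to `v`. -/
def incidentLabels {V : Type} [Fintype V] (G : EOGraph V) (v : V) : Set ℝ :=
  G.label '' {e | e ∈ G.graph.edgeSet ∧ v ∈ e}

/-- The vertex label `l(v)`: the second smallest label among the edges incident to `v`
(meaningful when `v` has degree at least 2). -/
noncomputable def secondLabel {V : Type} [Fintype V] (G : EOGraph V) (v : V) : ℝ :=
  sInf (incidentLabels G v \ {sInf (incidentLabels G v)})

/-- `v` has degree at least 2. -/
def DegTwo {V : Type} [Fintype V] (G : EOGraph V) (v : V) : Prop :=
  2 ≤ {e | e ∈ G.graph.edgeSet ∧ v ∈ e}.ncard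

/-- An edge `xy` (left end `x`, right end `y`) is left inclined if `l(x) < l(y) ≤ L(xy)`. -/
def LeftInclined {V : Type} [Fintype V] (G : EOBigraph V) (e : Sym2 V) : Prop :=
  ∃ x y : V, e = s(x, y) ∧ e ∈ G.toEOGraph.graph.edgeSet ∧
    G.side x = false ∧ G.side y = true ∧
    DegTwo G.toEOGraph x ∧ DegTwo G.toEOGraph y ∧
    secondLabel G.toEOGraph x < secondLabel G.toEOGraph y ∧
    secondLabel G.toEOGraph y ≤ G.toEOGraph.label e

/-- An edge `xy` (left end `x`, right end `y`) is right inclined if `l(y) < l(x) ≤ L(xy)`. -/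
def RightInclined {V : Type} [Fintype V] (G : EOBigraph V) (e : Sym2 V) : Prop :=
  ∃ x y : V, e = s(x, y) ∧ e ∈ G.toEOGraph.graph.edgeSet ∧
    G.side x = false ∧ G.side y = true ∧
    DegTwo G.toEOGraph x ∧ DegTwo G.toEOGraph y ∧
    secondLabel G.toEOGraph y < secondLabel G.toEOGraph x ∧
    secondLabel G.toEOGraph x ≤ G.toEOGraph.label e

/-- `G_l`: the spanning sub-bigraph of the left inclined edges of `G`. -/
def inclinedLeftSub {V : Type} [Fintype V] (G : EOBigraph V) : EOBigraph V :=
  bigraphRestrict G (LeftInclined G)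

/-- `G_r`: the spanning sub-bigraph of the right inclined edges of `G`. -/
def inclinedRightSub {V : Type} [Fintype V] (G : EOBigraph V) : EOBigraph V :=
  bigraphRestrict G (RightInclined G)

/-- The underlying simple graph of `P` is a path. -/
def IsPathEO {V : Type} [Fintype V] (P : EOGraph V) : Prop :=
  ∃ (k : ℕ) (f : V ≃ Fin k), ∀ a b, P.graph.Adj a b ↔ (SimpleGraph.pathGraph k).Adj (f a) (f b)

/-- A monotone path: the labels increase (or decrease) monotonically along the path. -/
def IsMonotonePath {V : Type} [Fintype V] (P : EOGraph V) : Prop :=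
  ∃ (k : ℕ) (w : Fin k → ℝ) (hw : Function.Injective w),
    (StrictMono w ∨ StrictAnti w) ∧ EOIsoTo (pathEO k w hw) P

/-- A flipped path: obtained from a monotone path (with at least 3 edges) by swapping
either the two smallest or the two largest labels. -/
def IsFlippedPath {V : Type} [Fintype V] (P : EOGraph V) : Prop :=
  ∃ (k : ℕ) (hk : 4 ≤ k) (w : Fin k → ℝ) (hw : StrictMono w),
    EOIsoTo (pathEO k (w ∘ (Equiv.swap (⟨0, by omega⟩ : Fin k) ⟨1, by omega⟩))
      (hw.injective.comp (Equiv.injective _))) P ∨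
    EOIsoTo (pathEO k (w ∘ (Equiv.swap (⟨k-3, by omega⟩ : Fin k) ⟨k-2, by omega⟩))
      (hw.injective.comp (Equiv.injective _))) P

/-- 0-1 matrix containment: `A` contains `B` if `B` can be obtained from a submatrix of `A`
by possibly changing some 1 entries to 0. -/
def MContains {m n p q : ℕ} (A : Fin m → Fin n → Bool) (B : Fin p → Fin q → Bool) : Prop :=
  ∃ (r : Fin p → Fin m) (c : Fin q → Fin n), StrictMono r ∧ StrictMono c ∧
    ∀ i j, B i j = true → A (r i) (c j) = true

/-- The extremal function of a 0-1 matrix `B`: the maximum number of 1 entries in an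
`n × n` 0-1 matrix avoiding `B`. -/
noncomputable def mex {p q : ℕ} (n : ℕ) (B : Fin p → Fin q → Bool) : ℕ :=
  sSup {k | ∃ A : Fin n → Fin n → Bool, ¬ MContains A B ∧
    k = (Finset.univ.filter fun ij : Fin n × Fin n => A ij.1 ij.2 = true).card}

/-- The staircase with positions `p 0, …, p t` describes the matrix `A`. -/
def DescribedBy {nr nc : ℕ} (A : Fin nr → Fin nc → Bool) (t : ℕ)
    (p : Fin (t + 1) → Fin nr × Fin nc) : Prop :=
  (∀ k : Fin t,
      ((p k.succ).1.val = (p k.castSucc).1.val + 1 ∧ (p k.succ).2 = (p k.castSucc).2) ∨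
      ((p k.succ).1 = (p k.castSucc).1 ∧ (p k.succ).2.val = (p k.castSucc).2.val + 1)) ∧
  ∀ i j, A i j = true ↔
    ((∃ k, p k = (i, j)) ∨
     (i = (p 0).1 ∧ j < (p 0).2) ∨ (j = (p 0).2 ∧ i < (p 0).1) ∨
     (i = (p (Fin.last t)).1 ∧ (p (Fin.last t)).2 < j) ∨
     (j = (p (Fin.last t)).2 ∧ (p (Fin.last t)).1 < i))

/-- A staircase matrix: `A`, or `A` with the order of its columns reversed, is described
by a staircase. -/
def IsStaircaseMatrix {nr nc : ℕ} (A : Fin nr → Fin nc → Bool) : Prop :=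
  (∃ t p, DescribedBy A t p) ∨ (∃ t p, DescribedBy (fun i j => A i j.rev) t p)

/-- The bipartite graph whose bipartite adjacency matrix is `A`. -/
def MatrixGraph {nr nc : ℕ} (A : Fin nr → Fin nc → Bool) : SimpleGraph (Fin nr ⊕ Fin nc) :=
  SimpleGraph.fromRel fun u v =>
    match u, v with
    | .inl i, .inr j => A i j = true
    | _, _ => False

/-- A connected 0-1 matrix: the bipartite adjacency matrix of a connected graph. -/
def IsConnectedMatrix {nr nc : ℕ} (A : Fin nr → Fin nc → Bool) : Prop :=
  (MatrixGraph A).Connected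

/-- Any finset of a linearly-labelled type has a "bottom `k`" subset. -/
lemma split_finset {α : Type*} [DecidableEq α] (w : α → ℝ) :
    ∀ (k : ℕ) (L : Finset α), Set.InjOn w ↑L → k ≤ L.card →
      ∃ S ⊆ L, S.card = k ∧ ∀ a ∈ S, ∀ b ∈ L \ S, w a < w b := by
  intro k
  induction k with
  | zero => intro L _ _; exact ⟨∅, by simp, by simp, by simp⟩
  | succ k ih =>
    intro L hinj hk
    obtain ⟨S, hSL, hScard, hS⟩ := ih L hinj (le_trans (Nat.le_succ k) hk)
    have hne : (L \ S).Nonempty := by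
      rw [← Finset.card_pos, Finset.card_sdiff_of_subset hSL]
      omega
    obtain ⟨b0, hb0, hmin⟩ := Finset.exists_min_image (L \ S) w hne
    have hb0L : b0 ∈ L := (Finset.mem_sdiff.mp hb0).1
    have hb0S : b0 ∉ S := (Finset.mem_sdiff.mp hb0).2
    refine ⟨insert b0 S, Finset.insert_subset hb0L hSL, ?_, ?_⟩
    · rw [Finset.card_insert_of_notMem hb0S, hScard]
    · intro a ha b hb
      have hbL : b ∈ L := (Finset.mem_sdiff.mp hb).1
      have hbS : b ∉ insert b0 S := (Finset.mem_sdiff.mp hb).2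
      have hbS' : b ∈ L \ S :=
        Finset.mem_sdiff.mpr ⟨hbL, fun h => hbS (Finset.mem_insert_of_mem h)⟩
      rcases Finset.mem_insert.mp ha with rfl | haS
      · have hble : w a ≤ w b := hmin b hbS'
        have hne' : a ≠ b := fun h => hbS (h ▸ Finset.mem_insert_self a S)
        have hwne : w a ≠ w b := fun h =>
          hne' (hinj (Finset.mem_coe.mpr hb0L) (Finset.mem_coe.mpr hbL) h)
        exact lt_of_le_of_ne hble hwne
      · exact hS a haS b hbS'

/-- The finset of edges at `v` with label smaller than that of `e`. -/
noncomputable def edgesBelow {V : Type} [Fintype V] (G : EOBigraph V) (v : V) (e : Sym2 V) :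
    Finset (Sym2 V) :=
  Set.Finite.toFinset (Set.toFinite
    {f | f ∈ G.toEOGraph.graph.edgeSet ∧ v ∈ f ∧ G.toEOGraph.label f < G.toEOGraph.label e})

lemma mem_edgesBelow {V : Type} [Fintype V] {G : EOBigraph V} {v : V} {e f : Sym2 V} :
    f ∈ edgesBelow G v e ↔
      f ∈ G.toEOGraph.graph.edgeSet ∧ v ∈ f ∧ G.toEOGraph.label f < G.toEOGraph.label e := by
  simp only [edgesBelow, Set.Finite.mem_toFinset, Set.mem_setOf_eq]

/-- Key lemma: a non-leaning edge has fewer than `2c` smaller edges at one of its ends. -/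
lemma nonleaning_small {V : Type} [Fintype V] (c : ℕ) (hc : 1 ≤ c) (G : EOBigraph V)
    (x y : V) (he : s(x, y) ∈ G.toEOGraph.graph.edgeSet)
    (hx : G.side x = false) (hy : G.side y = true)
    (hL : ¬ LeftLeaning c G s(x, y)) (hR : ¬ RightLeaning c G s(x, y)) :
    (edgesBelow G x s(x, y)).card < 2 * c ∨ (edgesBelow G y s(x, y)).card < 2 * c := by
  classical
  by_contra h
  push_neg at h
  obtain ⟨h1, h2⟩ := h
  set L := G.toEOGraph.label with hLdef
  set e : Sym2 V := s(x, y) with hedef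
  have hxney : x ≠ y := (G.toEOGraph.graph.ne_of_adj ((G.toEOGraph.graph.mem_edgeSet).mp he))
  set Bx := edgesBelow G x e with hBx
  set By := edgesBelow G y e with hBy
  have hinjx : Set.InjOn L ↑Bx := by
    intro a ha b hb hab
    exact G.toEOGraph.inj a (mem_edgesBelow.mp ha).1 b (mem_edgesBelow.mp hb).1 hab
  obtain ⟨S, hSsub, hScard, hSsplit⟩ := split_finset L c Bx hinjx (le_trans (by omega) h1)
  have hSne : S.Nonempty := Finset.card_pos.mp (by omega)
  obtain ⟨t, htS, htmax⟩ := Finset.exists_max_image S L hSne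
  have htBx : t ∈ Bx := hSsub htS
  have htlt : L t < L e := (mem_edgesBelow.mp htBx).2.2
  -- no edge at `y` below `e` has the same label as `t`
  have hnolabel : ∀ f ∈ By, L f ≠ L t := by
    intro f hf hft
    have hfm := mem_edgesBelow.mp hf
    have htm := mem_edgesBelow.mp htBx
    have : f = t := G.toEOGraph.inj f hfm.1 t htm.1 hft
    subst this
    have : f = e := (Sym2.mem_and_mem_iff hxney).mp ⟨htm.2.1, hfm.2.1⟩
    rw [this] at hfm
    exact lt_irrefl _ hfm.2.2
  set Bhigh := By.filter (fun f => L t < L f) with hBhigh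
  set Blow := By.filter (fun f => L f < L t) with hBlow
  by_cases hcase : c ≤ Bhigh.card
  · -- left-leaning
    obtain ⟨S', hS'sub, hS'card⟩ := Finset.exists_subset_card_eq hcase
    apply hL
    refine ⟨x, y, rfl, he, hx, hy, S, S', hScard, hS'card, ?_, ?_, ?_, ?_⟩
    · intro f hf
      have := mem_edgesBelow.mp (hSsub hf)
      exact ⟨this.1, this.2.1⟩
    · intro f hf
      have := mem_edgesBelow.mp (Finset.mem_of_mem_filter f (hS'sub hf))
      exact ⟨this.1, this.2.1⟩
    · intro f hf f' hf'
      have h1' : L f ≤ L t := htmax f hf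
      have h2' : L t < L f' := (Finset.mem_filter.mp (hS'sub hf')).2
      exact lt_of_le_of_lt h1' h2'
    · intro f' hf'
      exact (mem_edgesBelow.mp (Finset.mem_of_mem_filter f' (hS'sub hf'))).2.2
  · -- right-leaning
    push_neg at hcase
    have hBycover : By ⊆ Blow ∪ Bhigh := by
      intro f hf
      rcases lt_trichotomy (L f) (L t) with hlt | heq | hgt
      · exact Finset.mem_union_left _ (Finset.mem_filter.mpr ⟨hf, hlt⟩)
      · exact absurd heq (hnolabel f hf)
      · exact Finset.mem_union_right _ (Finset.mem_filter.mpr ⟨hf, hgt⟩)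
    have hBlowcard : c ≤ Blow.card := by
      have := Finset.card_le_card hBycover
      have := Finset.card_union_le Blow Bhigh
      omega
    obtain ⟨S'', hS''sub, hS''card⟩ := Finset.exists_subset_card_eq hBlowcard
    have hsdcard : c ≤ (Bx \ S).card := by
      rw [Finset.card_sdiff_of_subset hSsub]
      omega
    obtain ⟨Sx, hSxsub, hSxcard⟩ := Finset.exists_subset_card_eq hsdcard
    apply hR
    refine ⟨x, y, rfl, he, hx, hy, Sx, S'', hSxcard, hS''card, ?_, ?_, ?_, ?_⟩
    · intro f hf
      have := mem_edgesBelow.mp (Finset.mem_sdiff.mp (hSxsub hf)).1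
      exact ⟨this.1, this.2.1⟩
    · intro f hf
      have := mem_edgesBelow.mp (Finset.mem_of_mem_filter f (hS''sub hf))
      exact ⟨this.1, this.2.1⟩
    · intro f' hf' f hf
      have h1' : L f' < L t := (Finset.mem_filter.mp (hS''sub hf')).2
      have h2' : L t < L f := hSsplit t htS f (hSxsub hf)
      exact lt_trans h1' h2'
    · intro f hf
      exact (mem_edgesBelow.mp (Finset.mem_sdiff.mp (hSxsub hf)).1).2.2

/-- The finset of edges at `v`. -/
noncomputable def edgesAt {V : Type} [Fintype V] (G : EOBigraph V) (v : V) : Finset (Sym2 V) :=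
  Set.Finite.toFinset (Set.toFinite {f | f ∈ G.toEOGraph.graph.edgeSet ∧ v ∈ f})

lemma mem_edgesAt {V : Type} [Fintype V] {G : EOBigraph V} {v : V} {f : Sym2 V} :
    f ∈ edgesAt G v ↔ f ∈ G.toEOGraph.graph.edgeSet ∧ v ∈ f := by
  simp only [edgesAt, Set.Finite.mem_toFinset, Set.mem_setOf_eq]

open Classical in
/-- At any vertex, at most `k` edges have fewer than `k` smaller edges at that vertex. -/
lemma lowrank_card_le {V : Type} [Fintype V] (G : EOBigraph V) (v : V) (k : ℕ) :
    ((edgesAt G v).filter (fun f => (edgesBelow G v f).card < k)).card ≤ k := by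
  classical
  have hinj : Set.InjOn (fun f => (edgesBelow G v f).card)
      ↑((edgesAt G v).filter (fun f => (edgesBelow G v f).card < k)) := by
    intro a ha b hb hab
    have haA := mem_edgesAt.mp (Finset.mem_filter.mp (Finset.mem_coe.mp ha)).1
    have hbA := mem_edgesAt.mp (Finset.mem_filter.mp (Finset.mem_coe.mp hb)).1
    by_contra hne
    have hmono : ∀ p q : Sym2 V, p ∈ G.toEOGraph.graph.edgeSet → v ∈ p →
        q ∈ G.toEOGraph.graph.edgeSet → v ∈ q →
        G.toEOGraph.label p < G.toEOGraph.label q →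
        (edgesBelow G v p).card < (edgesBelow G v q).card := by
      intro p q hp hvp hq hvq hpq
      apply Finset.card_lt_card
      constructor
      · intro f hf
        have := mem_edgesBelow.mp hf
        exact mem_edgesBelow.mpr ⟨this.1, this.2.1, lt_trans this.2.2 hpq⟩
      · intro hsub
        have hpmem : p ∈ edgesBelow G v q := mem_edgesBelow.mpr ⟨hp, hvp, hpq⟩
        have := mem_edgesBelow.mp (hsub hpmem)
        exact lt_irrefl _ this.2.2
    rcases lt_trichotomy (G.toEOGraph.label a) (G.toEOGraph.label b) with hlt | heq | hgt
    · exact absurd hab (Nat.ne_of_lt (hmono a b haA.1 haA.2 hbA.1 hbA.2 hlt))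
    · exact hne (G.toEOGraph.inj a haA.1 b hbA.1 heq)
    · exact absurd hab (Nat.ne_of_lt' (hmono b a hbA.1 hbA.2 haA.1 haA.2 hgt))
  have h := Finset.card_le_card_of_injOn (fun f => (edgesBelow G v f).card)
    (fun f hf => Finset.mem_range.mpr (Finset.mem_filter.mp hf).2) hinj
  simpa using h

lemma sym2_decomp {V : Type} (e : Sym2 V) : ∃ u v : V, e = s(u, v) :=
  Sym2.inductionOn e (fun u v => ⟨u, v, rfl⟩)

/-- For every positive integer `c`, every edge-ordered bigraph on `n` vertices
has at most `2cn` `c`-non-leaning edges. -/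
theorem stmt_4 {V : Type} [Fintype V] (c : ℕ) (hc : 1 ≤ c) (G : EOBigraph V) :
    {e | e ∈ G.toEOGraph.graph.edgeSet ∧ ¬ LeftLeaning c G e ∧ ¬ RightLeaning c G e}.ncard
      ≤ 2 * c * Fintype.card V := by
  classical
  set NE := {e | e ∈ G.toEOGraph.graph.edgeSet ∧ ¬ LeftLeaning c G e ∧ ¬ RightLeaning c G e}
    with hNE
  have hfin : NE.Finite := Set.toFinite _
  rw [Set.ncard_eq_toFinset_card NE hfin]
  set T : V → Finset (Sym2 V) :=
    fun v => (edgesAt G v).filter (fun f => (edgesBelow G v f).card < 2 * c) with hT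
  have hsub : hfin.toFinset ⊆ Finset.univ.biUnion T := by
    intro e hee
    rw [Set.Finite.mem_toFinset] at hee
    obtain ⟨hemem, hnl, hnr⟩ := hee
    obtain ⟨u, v, rfl⟩ := sym2_decomp e
    have hadj : G.toEOGraph.graph.Adj u v := (G.toEOGraph.graph.mem_edgeSet).mp hemem
    have hprop := G.proper u v hadj
    have hkey : ∃ w : V, w ∈ s(u, v) ∧ (edgesBelow G w s(u, v)).card < 2 * c := by
      cases hu : G.side u with
      | false =>
        have hv : G.side v = true := by
          cases hv : G.side v with
          | false => exact absurd (hu.trans hv.symm) hprop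
          | true => rfl
        rcases nonleaning_small c hc G u v hemem hu hv hnl hnr with h | h
        · exact ⟨u, Sym2.mem_mk_left u v, h⟩
        · exact ⟨v, Sym2.mem_mk_right u v, h⟩
      | true =>
        have hv : G.side v = false := by
          cases hv : G.side v with
          | true => exact absurd (hu.trans hv.symm) hprop
          | false => rfl
        have hswap : s(u, v) = s(v, u) := Sym2.eq_swap
        rw [hswap] at hemem hnl hnr ⊢
        rcases nonleaning_small c hc G v u hemem hv hu hnl hnr with h | h
        · exact ⟨v, Sym2.mem_mk_left v u, h⟩
        · exact ⟨u, Sym2.mem_mk_right v u, h⟩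
    obtain ⟨w, hwmem, hwcard⟩ := hkey
    exact Finset.mem_biUnion.mpr ⟨w, Finset.mem_univ w,
      Finset.mem_filter.mpr ⟨mem_edgesAt.mpr ⟨hemem, hwmem⟩, hwcard⟩⟩
  calc hfin.toFinset.card ≤ (Finset.univ.biUnion T).card := Finset.card_le_card hsub
    _ ≤ ∑ v : V, (T v).card := Finset.card_biUnion_le
    _ ≤ ∑ _v : V, 2 * c := Finset.sum_le_sum (fun v _ => lowrank_card_le G v (2 * c))
    _ = Fintype.card V * (2 * c) := by
        rw [Finset.sum_const, Finset.card_univ, smul_eq_mul]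
    _ = 2 * c * Fintype.card V := Nat.mul_comm _ _
end

section
/- Let c, i ≥ 1 be integers and let G be an edge-ordered bigraph on n vertices. Then the number of edges of G contained neither in G^{c-left}_i nor in G^{c-right}_i is at most 2·i²·c·n. -/
set_option maxHeartbeats 1000000

/-! If an edge `e = xy` of both `G^{c-left}_j` and `G^{c-right}_k` has at least `2c` smaller
common edges at `x` and at `y`, cut those at `x` after the `c`-th smallest: at least `c` of those
at `y` lie on one side of the cut, so `e` is `c`-left-leaning in `G^{c-left}_j` or `c`-right-leaning
in `G^{c-right}_k`. Hence an edge lying in neither `G^{c-left}_i` nor `G^{c-right}_i` is, for the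
rounds `j, k < i` in which it is dropped, among the `2c` smallest common edges of `G^{c-left}_j`
and `G^{c-right}_k` at one of its ends, and there are at most `i² · n · 2c` such edges. -/

section Combinatorics

open Finset

variable {α β : Type*} [LinearOrder β]

lemma exists_subset_card_eq_forall_lt_sdiff [DecidableEq α] (L : α → β) {c : ℕ} :
    ∀ {s : Finset α}, Set.InjOn L s → c ≤ #s →
      ∃ t ⊆ s, #t = c ∧ ∀ x ∈ t, ∀ y ∈ s \ t, L x < L y := by
  induction c with
  | zero => exact fun _ _ => ⟨∅, empty_subset _, card_empty, by simp⟩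
  | succ c ih =>
    intro s hL hcs
    obtain ⟨m, hm, hmin⟩ := s.exists_min_image L (card_pos.mp (by omega))
    obtain ⟨t, hts, htc, hlt⟩ :=
      ih (hL.mono (coe_subset.mpr (erase_subset m s))) (by rw [card_erase_of_mem hm]; omega)
    have hmt : m ∉ t := fun h => by simpa using hts h
    refine ⟨insert m t, insert_subset hm (hts.trans (erase_subset m s)),
      by rw [card_insert_of_notMem hmt, htc], ?_⟩
    intro x hx y hy
    obtain ⟨hys, hyt⟩ := mem_sdiff.mp hy
    have hym : y ≠ m := fun h => hyt (h ▸ mem_insert_self m t)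
    rcases mem_insert.mp hx with rfl | hxt
    · exact (hmin y hys).lt_of_ne fun h => hym (hL hys hm h.symm)
    · exact hlt x hxt y
        (mem_sdiff.mpr ⟨mem_erase.mpr ⟨hym, hys⟩, fun h => hyt (mem_insert_of_mem h)⟩)

lemma exists_separated_subsets [DecidableEq α] (L : α → β) {A B : Finset α}
    (hA : Set.InjOn L A) {c : ℕ} (hAc : 2 * c ≤ #A) (hBc : 2 * c ≤ #B) :
    ∃ S ⊆ A, ∃ S' ⊆ B, #S = c ∧ #S' = c ∧
      ((∀ f ∈ S, ∀ f' ∈ S', L f < L f') ∨ (∀ f' ∈ S', ∀ f ∈ S, L f' < L f)) := by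
  obtain ⟨T, hTA, hTc, hT⟩ := exists_subset_card_eq_forall_lt_sdiff L hA (c := c) (by omega)
  have hsplit := card_filter_add_card_filter_not (s := B) (fun f => ∀ t ∈ T, L t < L f)
  by_cases habove : c ≤ #{f ∈ B | ∀ t ∈ T, L t < L f}
  · obtain ⟨S', hS'B, hS'c⟩ := exists_subset_card_eq habove
    refine ⟨T, hTA, S', hS'B.trans (filter_subset _ _), hTc, hS'c, Or.inl ?_⟩
    exact fun f hf f' hf' => (mem_filter.mp (hS'B hf')).2 f hf
  · obtain ⟨S', hS'B, hS'c⟩ :=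
      exists_subset_card_eq (s := {f ∈ B | ¬∀ t ∈ T, L t < L f}) (n := c) (by omega)
    obtain ⟨S, hSA, hSc⟩ := exists_subset_card_eq (s := A \ T) (n := c)
      (by rw [card_sdiff_of_subset hTA]; omega)
    refine ⟨S, hSA.trans sdiff_subset, S', hS'B.trans (filter_subset _ _), hSc, hS'c, Or.inr ?_⟩
    intro f' hf' f hf
    obtain ⟨t, htT, hle⟩ : ∃ t ∈ T, L f' ≤ L t := by simpa using (mem_filter.mp (hS'B hf')).2
    exact hle.trans_lt (hT t htT f (hSA hf))

lemma card_filter_card_filter_lt_lt_le (L : α → β) {s : Finset α} (hL : Set.InjOn L s) (m : ℕ) :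
    #{e ∈ s | #{f ∈ s | L f < L e} < m} ≤ m := by
  classical
  set T := {e ∈ s | #{f ∈ s | L f < L e} < m}
  rcases T.eq_empty_or_nonempty with hT | hT
  · simp [hT]
  obtain ⟨e, heT, hmax⟩ := T.exists_max_image L hT
  obtain ⟨hes, hem⟩ := mem_filter.mp heT
  have hbelow : T.erase e ⊆ {f ∈ s | L f < L e} := by
    intro f hf
    obtain ⟨hfe, hfT⟩ := mem_erase.mp hf
    have hfs := (mem_filter.mp hfT).1
    exact mem_filter.mpr ⟨hfs, (hmax f hfT).lt_of_ne fun h => hfe (hL hfs hes h)⟩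
  have := card_le_card hbelow
  rw [card_erase_of_mem heT] at this
  omega

end Combinatorics

lemma Nat.exists_lt_and_not_succ_of_not (P : ℕ → Prop) (h0 : P 0) {n : ℕ} (hn : ¬P n) :
    ∃ j < n, P j ∧ ¬P (j + 1) := by
  induction n with
  | zero => exact absurd h0 hn
  | succ n ih =>
    by_cases hPn : P n
    · exact ⟨n, n.lt_succ_self, hPn, hn⟩
    · obtain ⟨j, hj, hPj⟩ := ih hPn
      exact ⟨j, hj.trans n.lt_succ_self, hPj⟩

section Leaning

variable {V : Type} [Fintype V]

lemma mem_edgeSet_bigraphRestrict {G : EOBigraph V} {P : Sym2 V → Prop} {e : Sym2 V} :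
    e ∈ (bigraphRestrict G P).toEOGraph.graph.edgeSet ↔
      e ∈ G.toEOGraph.graph.edgeSet ∧ P e := by
  simp only [bigraphRestrict, SimpleGraph.edgeSet_fromEdgeSet, Set.mem_sdiff, Set.mem_ofPred_eq,
    and_iff_left_iff_imp]
  exact fun h => G.toEOGraph.graph.not_isDiag_of_mem_edgeSet h.1

lemma side_iterate {F : EOBigraph V → EOBigraph V} (hF : ∀ G, (F G).side = G.side) (n : ℕ)
    (G : EOBigraph V) : (F^[n] G).side = G.side := by
  induction n generalizing G with
  | zero => rfl
  | succ n ih => rw [Function.iterate_succ_apply, ih, hF]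

lemma label_iterate {F : EOBigraph V → EOBigraph V}
    (hF : ∀ G, (F G).toEOGraph.label = G.toEOGraph.label) (n : ℕ) (G : EOBigraph V) :
    (F^[n] G).toEOGraph.label = G.toEOGraph.label := by
  induction n generalizing G with
  | zero => rfl
  | succ n ih => rw [Function.iterate_succ_apply, ih, hF]

lemma leftIter_side (c n : ℕ) (G : EOBigraph V) : (leftIter c n G).side = G.side :=
  side_iterate (F := leftSub c) (fun _ => rfl) n G

lemma rightIter_side (c n : ℕ) (G : EOBigraph V) : (rightIter c n G).side = G.side :=
  side_iterate (F := rightSub c) (fun _ => rfl) n G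

lemma leftIter_label (c n : ℕ) (G : EOBigraph V) :
    (leftIter c n G).toEOGraph.label = G.toEOGraph.label :=
  label_iterate (F := leftSub c) (fun _ => rfl) n G

lemma rightIter_label (c n : ℕ) (G : EOBigraph V) :
    (rightIter c n G).toEOGraph.label = G.toEOGraph.label :=
  label_iterate (F := rightSub c) (fun _ => rfl) n G

lemma exists_not_leftLeaning_leftIter {c n : ℕ} {G : EOBigraph V} {e : Sym2 V}
    (he : e ∈ G.toEOGraph.graph.edgeSet) (hn : e ∉ (leftIter c n G).toEOGraph.graph.edgeSet) :
    ∃ j < n, e ∈ (leftIter c j G).toEOGraph.graph.edgeSet ∧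
      ¬LeftLeaning c (leftIter c j G) e := by
  obtain ⟨j, hj, hin, hout⟩ := Nat.exists_lt_and_not_succ_of_not
    (fun j => e ∈ (leftIter c j G).toEOGraph.graph.edgeSet) he hn
  rw [leftIter, Function.iterate_succ_apply'] at hout
  exact ⟨j, hj, hin, fun hL => hout (mem_edgeSet_bigraphRestrict.mpr ⟨hin, hL⟩)⟩

lemma exists_not_rightLeaning_rightIter {c n : ℕ} {G : EOBigraph V} {e : Sym2 V}
    (he : e ∈ G.toEOGraph.graph.edgeSet) (hn : e ∉ (rightIter c n G).toEOGraph.graph.edgeSet) :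
    ∃ j < n, e ∈ (rightIter c j G).toEOGraph.graph.edgeSet ∧
      ¬RightLeaning c (rightIter c j G) e := by
  obtain ⟨j, hj, hin, hout⟩ := Nat.exists_lt_and_not_succ_of_not
    (fun j => e ∈ (rightIter c j G).toEOGraph.graph.edgeSet) he hn
  rw [rightIter, Function.iterate_succ_apply'] at hout
  exact ⟨j, hj, hin, fun hR => hout (mem_edgeSet_bigraphRestrict.mpr ⟨hin, hR⟩)⟩

lemma EOBigraph.exists_eq_left_right (G : EOBigraph V) {e : Sym2 V}
    (he : e ∈ G.toEOGraph.graph.edgeSet) :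
    ∃ x y : V, e = s(x, y) ∧ G.side x = false ∧ G.side y = true := by
  induction e using Sym2.inductionOn with
  | hf a b =>
    have hab := G.proper a b he
    cases ha : G.side a <;> cases hb : G.side b <;> simp only [ha, hb, ne_eq, not_true] at hab
    · exact ⟨a, b, rfl, ha, hb⟩
    · exact ⟨b, a, Sym2.eq_swap, hb, ha⟩

open Classical in
noncomputable def commonEdgesAt (A B : EOBigraph V) (v : V) : Finset (Sym2 V) :=
  {f | f ∈ A.toEOGraph.graph.edgeSet ∧ f ∈ B.toEOGraph.graph.edgeSet ∧ v ∈ f}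

lemma mem_commonEdgesAt {A B : EOBigraph V} {v : V} {f : Sym2 V} :
    f ∈ commonEdgesAt A B v ↔
      f ∈ A.toEOGraph.graph.edgeSet ∧ f ∈ B.toEOGraph.graph.edgeSet ∧ v ∈ f := by
  simp [commonEdgesAt]

lemma injOn_label_commonEdgesAt (A B : EOBigraph V) (v : V) :
    Set.InjOn A.toEOGraph.label (commonEdgesAt A B v) :=
  fun e he f hf => A.toEOGraph.inj e (mem_commonEdgesAt.mp he).1 f (mem_commonEdgesAt.mp hf).1

open Finset in
lemma exists_mem_card_commonEdgesAt_lt_of_not_leaning {c : ℕ} {A B : EOBigraph V}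
    (hside : B.side = A.side) (hlabel : B.toEOGraph.label = A.toEOGraph.label) {e : Sym2 V}
    (heA : e ∈ A.toEOGraph.graph.edgeSet) (heB : e ∈ B.toEOGraph.graph.edgeSet)
    (hnl : ¬LeftLeaning c A e) (hnr : ¬RightLeaning c B e) :
    ∃ v ∈ e, #{f ∈ commonEdgesAt A B v | A.toEOGraph.label f < A.toEOGraph.label e} < 2 * c := by
  classical
  obtain ⟨x, y, rfl, hx, hy⟩ := A.exists_eq_left_right heA
  by_contra! hlarge
  set L := A.toEOGraph.label
  obtain ⟨S, hS, S', hS', hSc, hS'c, hsep⟩ := exists_separated_subsets L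
    ((injOn_label_commonEdgesAt A B x).mono (coe_subset.mpr (filter_subset _ _)))
    (hlarge x (Sym2.mem_mk_left x y)) (hlarge y (Sym2.mem_mk_right x y))
  have hmem : ∀ v, ∀ f ∈ {f ∈ commonEdgesAt A B v | L f < L s(x, y)},
      f ∈ A.toEOGraph.graph.edgeSet ∧ f ∈ B.toEOGraph.graph.edgeSet ∧ v ∈ f ∧ L f < L s(x, y) :=
    fun v f hf => by simpa [mem_commonEdgesAt, and_assoc] using hf
  rcases hsep with hlt | hgt
  · refine hnl ⟨x, y, rfl, heA, hx, hy, S, S', hSc, hS'c, fun f hf => ?_, fun f hf => ?_, hlt,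
      fun f hf => (hmem y f (hS' hf)).2.2.2⟩
    · exact ⟨(hmem x f (hS hf)).1, (hmem x f (hS hf)).2.2.1⟩
    · exact ⟨(hmem y f (hS' hf)).1, (hmem y f (hS' hf)).2.2.1⟩
  · refine hnr ⟨x, y, rfl, heB, hside ▸ hx, hside ▸ hy, S, S', hSc, hS'c, fun f hf => ?_,
      fun f hf => ?_, hlabel ▸ hgt, fun f hf => hlabel ▸ (hmem x f (hS hf)).2.2.2⟩
    · exact ⟨(hmem x f (hS hf)).2.1, (hmem x f (hS hf)).2.2.1⟩
    · exact ⟨(hmem y f (hS' hf)).2.1, (hmem y f (hS' hf)).2.2.1⟩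

end Leaning

open Finset in
theorem stmt_5_general {V : Type} [Fintype V] (c i : ℕ) (G : EOBigraph V) :
    {e | e ∈ G.toEOGraph.graph.edgeSet ∧
         e ∉ (leftIter c i G).toEOGraph.graph.edgeSet ∧
         e ∉ (rightIter c i G).toEOGraph.graph.edgeSet}.ncard
      ≤ 2 * i ^ 2 * c * Fintype.card V := by
  classical
  let lowEdges : ℕ × ℕ × V → Finset (Sym2 V) := fun ⟨j, k, v⟩ =>
    {e ∈ commonEdgesAt (leftIter c j G) (rightIter c k G) v |
      #{f ∈ commonEdgesAt (leftIter c j G) (rightIter c k G) v |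
        G.toEOGraph.label f < G.toEOGraph.label e} < 2 * c}
  have hsub : {e | e ∈ G.toEOGraph.graph.edgeSet ∧
      e ∉ (leftIter c i G).toEOGraph.graph.edgeSet ∧
      e ∉ (rightIter c i G).toEOGraph.graph.edgeSet} ⊆
      ↑((range i ×ˢ range i ×ˢ univ).biUnion lowEdges) := by
    rintro e ⟨he, hL, hR⟩
    obtain ⟨j, hj, heL, hnl⟩ := exists_not_leftLeaning_leftIter he hL
    obtain ⟨k, hk, heR, hnr⟩ := exists_not_rightLeaning_rightIter he hR
    obtain ⟨v, hv, hlow⟩ := exists_mem_card_commonEdgesAt_lt_of_not_leaning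
      ((rightIter_side c k G).trans (leftIter_side c j G).symm)
      ((rightIter_label c k G).trans (leftIter_label c j G).symm) heL heR hnl hnr
    rw [leftIter_label] at hlow
    exact mem_biUnion.mpr ⟨(j, k, v), by simp [hj, hk],
      mem_filter.mpr ⟨mem_commonEdgesAt.mpr ⟨heL, heR, hv⟩, hlow⟩⟩
  calc _ ≤ #((range i ×ˢ range i ×ˢ univ).biUnion lowEdges) :=
        (Set.ncard_le_ncard hsub).trans (Set.ncard_coe_finset _).le
    _ ≤ #(range i ×ˢ range i ×ˢ (univ : Finset V)) * (2 * c) :=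
        card_biUnion_le_card_mul _ _ _ fun ⟨j, k, v⟩ _ => by
          simpa only [leftIter_label] using card_filter_card_filter_lt_lt_le _
            (injOn_label_commonEdgesAt (leftIter c j G) (rightIter c k G) v) (2 * c)
    _ = 2 * i ^ 2 * c * Fintype.card V := by
      simp only [card_product, card_range, card_univ]; ring

/-- For `c, i ≥ 1`, at most `2·i²·c·n` edges of an edge-ordered bigraph `G` on
`n` vertices are contained neither in `G^{c-left}_i` nor in `G^{c-right}_i`. -/
theorem stmt_5 {V : Type} [Fintype V] (c i : ℕ) (hc : 1 ≤ c) (hi : 1 ≤ i) (G : EOBigraph V) :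
    {e | e ∈ G.toEOGraph.graph.edgeSet ∧
         e ∉ (leftIter c i G).toEOGraph.graph.edgeSet ∧
         e ∉ (rightIter c i G).toEOGraph.graph.edgeSet}.ncard
      ≤ 2 * i ^ 2 * c * Fintype.card V :=
  stmt_5_general c i G
end

section
/- An edge-ordered graph of order chromatic number 2 is a semi-caterpillar if and only if it is connected and contains none of the edge-ordered paths P_4^{213}, P_5^{1342}, P_5^{1432}. -/
set_option maxHeartbeats 1000000

/-!
The hypothesis on the order chromatic number yields a proper 2-colouring of `G` whose colour
class `0` consists of close vertices: pull back a lexicographic edge-ordering of a bipartite host.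
The three patterns are paths: along a path, `P₄^{213}` is a valley of the label sequence and the
two `P₅` are humps. In a semi-caterpillar the edge order can pass from one side of a bridge to the
other only between consecutive edges linked by the bridge, and this rules out the patterns.
Conversely, without the patterns, the least edge of a cycle sits in a valley, and the path
joining two consecutive non-adjacent edges has a valley or a hump unless it is a single edge
linking them.
-/

def HasValley (l : ℕ → ℝ) (n : ℕ) : Prop :=
  ∃ j, j + 2 < n ∧ l (j + 1) < l j ∧ l (j + 1) < l (j + 2)

def HasHump (l : ℕ → ℝ) (n : ℕ) : Prop :=
  ∃ j, j + 3 < n ∧ l j < l (j + 1) ∧ l j < l (j + 2) ∧ l (j + 3) < l (j + 1) ∧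
    l (j + 3) < l (j + 2)

section LabelSequences

variable {l : ℕ → ℝ} {n : ℕ}

lemma hasValley_of_lt {a b c : ℕ} (hl : Set.InjOn l (Set.Icc a b)) (hac : a < c) (hcb : c < b)
    (hbn : b < n) (hla : l c < l a) (hlb : l c < l b) : HasValley l n := by
  obtain ⟨m, hm, hmin⟩ := (Finset.Icc a b).exists_min_image l ⟨c, by simp; omega⟩
  simp only [Finset.mem_Icc] at hm hmin
  have hlt : ∀ i, a ≤ i → i ≤ b → i ≠ m → l m < l i := fun i hai hib him =>
    (hmin i ⟨hai, hib⟩).lt_of_ne fun h => him (hl ⟨hai, hib⟩ hm h.symm)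
  have ham : a ≠ m := fun h => by linarith [hmin c ⟨hac.le, hcb.le⟩, congrArg l h]
  have hbm : b ≠ m := fun h => by linarith [hmin c ⟨hac.le, hcb.le⟩, congrArg l h]
  refine ⟨m - 1, by omega, ?_, ?_⟩ <;> rw [show m - 1 + 1 = m by omega]
  · exact hlt _ (by omega) (by omega) (by omega)
  · exact hlt _ (by omega) (by omega) (by omega)

/-- If all interior terms exceed both end terms, look at the two largest terms: adjacent, they
form a hump; otherwise the smallest term between them is a valley. -/
lemma hasValley_or_hasHump (hl : Set.InjOn l (Set.Iic n)) (hn : 3 ≤ n)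
    (hends : ∀ i, 0 < i → i < n → l 0 < l i ∧ l n < l i) :
    HasValley l (n + 1) ∨ HasHump l (n + 1) := by
  obtain ⟨m₁, hm₁, hmax₁⟩ := (Finset.Ioo 0 n).exists_max_image l ⟨1, by simp; omega⟩
  obtain ⟨m₂, hm₂, hmax₂⟩ := ((Finset.Ioo 0 n).erase m₁).exists_max_image l
    ⟨if m₁ = 1 then 2 else 1, by split_ifs <;> simp <;> omega⟩
  simp only [Finset.mem_Ioo, Finset.mem_erase] at hm₁ hm₂ hmax₁ hmax₂
  have hlt : ∀ i j, i ≤ n → j ≤ n → i ≠ j → l i ≤ l j → l i < l j := fun i j hi hj hij h =>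
    h.lt_of_ne fun h' => hij (hl hi hj h')
  have h₂₁ : l m₂ < l m₁ := hlt _ _ (by omega) (by omega) hm₂.1 (hmax₁ _ hm₂.2)
  have hbelow : ∀ i ≤ n, i ≠ m₁ → i ≠ m₂ → l i < l m₂ ∧ l i < l m₁ := by
    intro i hi h₁ h₂
    have : l i < l m₂ := by
      rcases Nat.eq_zero_or_pos i with rfl | hi0
      · exact (hends m₂ (by omega) (by omega)).1
      rcases hi.lt_or_eq with hi' | rfl
      · exact hlt _ _ hi (by omega) h₂ (hmax₂ i ⟨h₁, hi0, hi'⟩)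
      · exact (hends m₂ (by omega) (by omega)).2
    exact ⟨this, this.trans h₂₁⟩
  by_cases hadj : m₂ = m₁ + 1 ∨ m₁ = m₂ + 1
  · right
    rcases hadj with rfl | rfl
    · obtain ⟨h₁, h₂⟩ := hbelow (m₁ - 1) (by omega) (by omega) (by omega)
      obtain ⟨h₃, h₄⟩ := hbelow (m₁ + 2) (by omega) (by omega) (by omega)
      refine ⟨m₁ - 1, by omega, ?_⟩
      rw [show m₁ - 1 + 1 = m₁ by omega, show m₁ - 1 + 2 = m₁ + 1 by omega,
        show m₁ - 1 + 3 = m₁ + 2 by omega]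
      exact ⟨h₂, h₁, h₄, h₃⟩
    · obtain ⟨h₁, h₂⟩ := hbelow (m₂ - 1) (by omega) (by omega) (by omega)
      obtain ⟨h₃, h₄⟩ := hbelow (m₂ + 2) (by omega) (by omega) (by omega)
      refine ⟨m₂ - 1, by omega, ?_⟩
      rw [show m₂ - 1 + 1 = m₂ by omega, show m₂ - 1 + 2 = m₂ + 1 by omega,
        show m₂ - 1 + 3 = m₂ + 2 by omega]
      exact ⟨h₁, h₂, h₃, h₄⟩
  · left
    rcases lt_or_gt_of_ne hm₂.1 with h | h
    · obtain ⟨h₁, h₂⟩ := hbelow (m₂ + 1) (by omega) (by omega) (by omega)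
      exact hasValley_of_lt (hl.mono fun i hi => by simp at hi ⊢; omega)
        (show m₂ < m₂ + 1 by omega) (show m₂ + 1 < m₁ by omega) (by omega) h₁ h₂
    · obtain ⟨h₁, h₂⟩ := hbelow (m₁ + 1) (by omega) (by omega) (by omega)
      exact hasValley_of_lt (hl.mono fun i hi => by simp at hi ⊢; omega)
        (show m₁ < m₁ + 1 by omega) (show m₁ + 1 < m₂ by omega) (by omega) h₂ h₁

end LabelSequences

namespace SimpleGraph

variable {V : Type} {H : SimpleGraph V}

/-- `q 0, q 1, …, q n` are the vertices of a path of length `n` in `H`. -/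
def IsPathSeq (H : SimpleGraph V) (q : ℕ → V) (n : ℕ) : Prop :=
  Set.InjOn q (Set.Iic n) ∧ ∀ i < n, H.Adj (q i) (q (i + 1))

namespace IsPathSeq

variable {q : ℕ → V} {n : ℕ}

lemma window (hq : H.IsPathSeq q n) {d m : ℕ} (h : d + m ≤ n) :
    H.IsPathSeq (fun i => q (d + i)) m :=
  ⟨fun i hi j hj hij => by
    have := hq.1 (show d + i ≤ n by simp at hi; omega) (show d + j ≤ n by simp at hj; omega) hij
    omega,
   fun i hi => hq.2 (d + i) (by omega)⟩

lemma reverse (hq : H.IsPathSeq q n) : H.IsPathSeq (fun i => q (n - i)) n :=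
  ⟨fun i hi j hj hij => by
    have := hq.1 (show n - i ≤ n by omega) (show n - j ≤ n by omega) hij
    simp at hi hj; omega,
   fun i hi => by
    have := (hq.2 (n - (i + 1)) (by omega)).symm
    rwa [show n - (i + 1) + 1 = n - i by omega] at this⟩

lemma mem_edgeSet (hq : H.IsPathSeq q n) {i : ℕ} (hi : i < n) : s(q i, q (i + 1)) ∈ H.edgeSet :=
  hq.2 i hi

lemma ne (hq : H.IsPathSeq q n) {i j : ℕ} (hi : i ≤ n) (hj : j ≤ n) (hij : i ≠ j) : q i ≠ q j :=
  fun h => hij (hq.1 hi hj h)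

lemma notMem_edge (hq : H.IsPathSeq q n) {i k : ℕ} (hi : i < n) (hk : k ≤ n) (hki : k ≠ i)
    (hki' : k ≠ i + 1) : q k ∉ s(q i, q (i + 1)) := by
  rw [Sym2.mem_iff]
  rintro (h | h)
  exacts [hq.ne hk hi.le hki h, hq.ne hk hi hki' h]

lemma edge_injOn (hq : H.IsPathSeq q n) : Set.InjOn (fun i => s(q i, q (i + 1))) (Set.Iio n) := by
  intro i hi j hj h
  have hi : i < n := hi
  have hj : j < n := hj
  rcases Sym2.eq_iff.mp h with ⟨h₁, -⟩ | ⟨h₁, h₂⟩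
  · exact hq.1 (by simp; omega) (by simp; omega) h₁
  · have := hq.1 (by simp; omega) (by simp; omega) h₁
    have := hq.1 (by simp; omega) (by simp; omega) h₂
    omega

end IsPathSeq

lemma Reachable.of_mem_edgeSet {e : Sym2 V} (he : e ∈ H.edgeSet) {u v : V} (hu : u ∈ e)
    (hv : v ∈ e) : H.Reachable u v := by
  obtain ⟨x, y⟩ := e
  have hxy : H.Adj x y := he
  rcases Sym2.mem_iff.mp hu with rfl | rfl <;> rcases Sym2.mem_iff.mp hv with rfl | rfl
  exacts [.rfl, hxy.reachable, hxy.symm.reachable, .rfl]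

lemma Walk.IsPath.isPathSeq {u v : V} {p : H.Walk u v} (hp : p.IsPath) :
    H.IsPathSeq p.getVert p.length :=
  ⟨hp.getVert_injOn, fun _ hi => p.adj_getVert_succ hi⟩

/-- Join the closest ends of the two edges by a shortest path. -/
lemma Connected.exists_isPathSeq_of_not_edgesAdjacent (hconn : H.Connected) {e f : Sym2 V}
    (he : e ∈ H.edgeSet) (hf : f ∈ H.edgeSet) (hef : ¬ EdgesAdjacent e f) :
    ∃ n q, 0 < n ∧ H.IsPathSeq q (n + 2) ∧ s(q 0, q 1) = e ∧ s(q (n + 1), q (n + 2)) = f := by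
  have hex : ∃ k, ∃ a ∈ e, ∃ b ∈ f, H.dist a b = k := by
    obtain ⟨x, y⟩ := e; obtain ⟨z, t⟩ := f
    exact ⟨_, x, Sym2.mem_mk_left _ _, z, Sym2.mem_mk_left _ _, rfl⟩
  classical
  obtain ⟨a, hae, b, hbf, hab⟩ := Nat.find_spec hex
  have hmin : ∀ a' ∈ e, ∀ b' ∈ f, H.dist a b ≤ H.dist a' b' := fun a' ha' b' hb' =>
    hab ▸ Nat.find_min' hex ⟨a', ha', b', hb', rfl⟩
  obtain ⟨a', rfl⟩ := Sym2.mem_iff_exists.mp hae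
  obtain ⟨b', rfl⟩ := Sym2.mem_iff_exists.mp hbf
  obtain ⟨w, hw, hwlen⟩ := hconn.exists_path_of_dist a b
  have ha'w : a' ∉ w.support := fun h => by
    have := w.length_dropUntil_lt_length h (H.ne_of_adj he).symm
    have := hmin a' (Sym2.mem_mk_right _ _) b (Sym2.mem_mk_left _ _)
    have := H.dist_le (w.dropUntil a' h)
    omega
  have hb'w : b' ∉ w.support := fun h => by
    have := w.length_takeUntil_lt_length h (H.ne_of_adj hf).symm
    have := hmin a (Sym2.mem_mk_left _ _) b' (Sym2.mem_mk_right _ _)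
    have := H.dist_le (w.takeUntil b' h)
    omega
  have ha'b' : a' ≠ b' := fun h => hef ⟨a', Sym2.mem_mk_right _ _, h ▸ Sym2.mem_mk_right _ _⟩
  have hae' : H.Adj a' a := (H.mem_edgeSet.mp he).symm
  have hbf' : H.Adj b b' := H.mem_edgeSet.mp hf
  let p := Walk.cons hae' (w.concat hbf')
  have hp : p.IsPath := by
    refine (hw.concat hb'w hbf').cons ?_
    simp [Walk.support_concat, ha'w, ha'b']
  have hlen : p.length = w.length + 2 := by simp [p, Walk.length_concat]
  refine ⟨w.length, p.getVert, ?_, hlen ▸ hp.isPathSeq, ?_, ?_⟩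
  · refine Nat.pos_of_ne_zero fun h => hef ⟨a, Sym2.mem_mk_left _ _, ?_⟩
    rw [Walk.eq_of_length_eq_zero h]; exact Sym2.mem_mk_left _ _
  · simp [p, Sym2.eq_swap]
  · have h1 : p.getVert (w.length + 1) = b := by
      simp [p, Walk.concat, Walk.getVert_append]
    rw [h1, ← hlen, Walk.getVert_length]

end SimpleGraph

namespace EOGraph

variable {V : Type} [Fintype V]

def edgeLabels (G : EOGraph V) (q : ℕ → V) (i : ℕ) : ℝ := G.label s(q i, q (i + 1))

/-- The third condition in `IsSemiCaterpillar`. -/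
def ConsecutiveLinked (G : EOGraph V) : Prop :=
  ∀ e f, Consecutive G e f →
    EdgesAdjacent e f ∨
    ∃ u v, s(u, v) ∈ G.graph.edgeSet ∧ u ∈ e ∧ v ∈ f ∧
      G.label e < G.label s(u, v) ∧ G.label f < G.label s(u, v)

variable {G : EOGraph V} {q : ℕ → V} {n : ℕ}

lemma edgeLabels_reverse {i : ℕ} (hi : i < n) :
    G.edgeLabels (fun k => q (n - k)) i = G.edgeLabels q (n - 1 - i) := by
  rw [edgeLabels, edgeLabels, Sym2.eq_swap, show n - (i + 1) = n - 1 - i by omega,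
    show n - i = n - 1 - i + 1 by omega]

lemma edgeLabels_injOn (hq : G.graph.IsPathSeq q n) : Set.InjOn (G.edgeLabels q) (Set.Iio n) :=
  fun _ hi _ hj h => hq.edge_injOn hi hj (G.inj _ (hq.mem_edgeSet hi) _ (hq.mem_edgeSet hj) h)

lemma pathEON_label {k : ℕ} {v : Fin k → ℕ} {hv : Function.Injective v} {i j : Fin k}
    (hij : (i : ℕ) + 1 = j) : (pathEON k v hv).label s(i, j) = v i := by
  simp [pathEON, pathEO, pathLabel, min_eq_left (Fin.le_def.mpr (by omega) : i ≤ j)]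

lemma eoContains_pathEON_iff {v : Fin (n + 1) → ℕ} (hv : Function.Injective v) :
    EOContains G (pathEON (n + 1) v hv) ↔ ∃ q, G.graph.IsPathSeq q n ∧
      ∀ i j : Fin (n + 1), (i : ℕ) < n → (j : ℕ) < n → v i < v j →
        G.edgeLabels q i < G.edgeLabels q j := by
  have hedge : ∀ (i : Fin (n + 1)) (hi : (i : ℕ) < n),
      s(i, ⟨i + 1, by omega⟩) ∈ (pathEON (n + 1) v hv).graph.edgeSet := fun i _ =>
    SimpleGraph.pathGraph_adj.mpr (Or.inl rfl)
  constructor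
  · rintro ⟨f, hf, hadj, hord⟩
    let q : ℕ → V := fun i => f (Fin.ofNat (n + 1) i)
    have hq : ∀ i : Fin (n + 1), q i = f i := fun i => by simp [q]
    have hq' : ∀ i (hi : i ≤ n), q i = f ⟨i, by omega⟩ := fun i hi => hq ⟨i, by omega⟩
    refine ⟨q, ⟨fun i hi j hj h => ?_, fun i hi => ?_⟩, fun i j hi hj hij => ?_⟩
    · rw [hq' i hi, hq' j hj] at h
      exact congrArg Fin.val (hf h)
    · rw [hq' i hi.le, hq' (i + 1) hi]
      exact hadj _ _ (SimpleGraph.pathGraph_adj.mpr (Or.inl rfl))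
    · have := hord _ (hedge i hi) _ (hedge j hj)
        (by rw [pathEON_label rfl, pathEON_label rfl]; exact_mod_cast hij)
      simpa [edgeLabels, hq, hq' (i + 1) (by omega), hq' (j + 1) (by omega)] using this
  · rintro ⟨q, hq, hord⟩
    refine ⟨fun i => q i, fun i j h => Fin.ext (hq.1 (by simp; omega) (by simp; omega) h),
      fun i j h => ?_, fun e he e' he' h => ?_⟩
    · rcases SimpleGraph.pathGraph_adj.mp h with h | h
      · simpa [← h] using hq.2 i (by omega)
      · simpa [← h] using (hq.2 j (by omega)).symm
    · obtain ⟨i, j, rfl, hij⟩ := pathGraph_edge_form he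
      obtain ⟨i', j', rfl, hij'⟩ := pathGraph_edge_form he'
      rw [pathEON_label hij, pathEON_label hij'] at h
      have := hord i i' (by omega) (by omega) (by exact_mod_cast h)
      simpa [edgeLabels, ← hij, ← hij'] using this

lemma eoContains_P4_213_iff : EOContains G P4_213 ↔ ∃ q, G.graph.IsPathSeq q 3 ∧
    G.edgeLabels q 1 < G.edgeLabels q 0 ∧ G.edgeLabels q 0 < G.edgeLabels q 2 := by
  refine (eoContains_pathEON_iff _).trans ⟨fun ⟨q, hq, hord⟩ => ⟨q, hq, ?_, ?_⟩,
    fun ⟨q, hq, h₁, h₂⟩ => ⟨q, hq, fun i j hi hj hij => ?_⟩⟩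
  · exact hord 1 0 (by decide) (by decide) (by decide)
  · exact hord 0 2 (by decide) (by decide) (by decide)
  · fin_cases i <;> fin_cases j <;> simp at hi hj hij ⊢ <;> linarith

lemma eoContains_P5_1342_iff : EOContains G P5_1342 ↔ ∃ q, G.graph.IsPathSeq q 4 ∧
    G.edgeLabels q 0 < G.edgeLabels q 3 ∧ G.edgeLabels q 3 < G.edgeLabels q 1 ∧
      G.edgeLabels q 1 < G.edgeLabels q 2 := by
  refine (eoContains_pathEON_iff _).trans ⟨fun ⟨q, hq, hord⟩ => ⟨q, hq, ?_, ?_, ?_⟩,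
    fun ⟨q, hq, h₁, h₂, h₃⟩ => ⟨q, hq, fun i j hi hj hij => ?_⟩⟩
  · exact hord 0 3 (by decide) (by decide) (by decide)
  · exact hord 3 1 (by decide) (by decide) (by decide)
  · exact hord 1 2 (by decide) (by decide) (by decide)
  · fin_cases i <;> fin_cases j <;> simp at hi hj hij ⊢ <;> linarith

lemma eoContains_P5_1432_iff : EOContains G P5_1432 ↔ ∃ q, G.graph.IsPathSeq q 4 ∧
    G.edgeLabels q 0 < G.edgeLabels q 3 ∧ G.edgeLabels q 3 < G.edgeLabels q 2 ∧
      G.edgeLabels q 2 < G.edgeLabels q 1 := by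
  refine (eoContains_pathEON_iff _).trans ⟨fun ⟨q, hq, hord⟩ => ⟨q, hq, ?_, ?_, ?_⟩,
    fun ⟨q, hq, h₁, h₂, h₃⟩ => ⟨q, hq, fun i j hi hj hij => ?_⟩⟩
  · exact hord 0 3 (by decide) (by decide) (by decide)
  · exact hord 3 2 (by decide) (by decide) (by decide)
  · exact hord 2 1 (by decide) (by decide) (by decide)
  · fin_cases i <;> fin_cases j <;> simp at hi hj hij ⊢ <;> linarith

lemma eoContains_P4_213_of_hasValley (hq : G.graph.IsPathSeq q n)
    (h : HasValley (G.edgeLabels q) n) : EOContains G P4_213 := by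
  obtain ⟨j, hj, h₁, h₂⟩ := h
  have hw := hq.window (d := j) (m := 3) (by omega)
  rcases lt_or_gt_of_ne ((edgeLabels_injOn hq).ne (show j < n by omega) (show j + 2 < n from hj)
    (by omega)) with h₀ | h₀
  · exact eoContains_P4_213_iff.mpr ⟨_, hw, h₁, h₀⟩
  · have hrl : ∀ i < 3, G.edgeLabels (fun k => q (j + (3 - k))) i = G.edgeLabels q (j + (2 - i)) :=
      fun i hi => edgeLabels_reverse (q := fun k => q (j + k)) hi
    refine eoContains_P4_213_iff.mpr ⟨_, hw.reverse, ?_, ?_⟩ <;>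
      simp only [hrl 0 (by decide), hrl 1 (by decide), hrl 2 (by decide)] <;> assumption

lemma eoContains_P5_of_hasHump (hq : G.graph.IsPathSeq q n) (h : HasHump (G.edgeLabels q) n) :
    EOContains G P5_1342 ∨ EOContains G P5_1432 := by
  obtain ⟨j, hj, h₁, h₂, h₃, h₄⟩ := h
  have hw := hq.window (d := j) (m := 4) (by omega)
  have hl := edgeLabels_injOn hq
  have h₁₂ := hl.ne (show j + 1 < n by omega) (show j + 2 < n by omega) (by omega)
  rcases lt_or_gt_of_ne (hl.ne (show j < n by omega) (show j + 3 < n from hj) (by omega))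
    with h₀ | h₀
  · rcases lt_or_gt_of_ne h₁₂ with h₅ | h₅
    · exact Or.inl (eoContains_P5_1342_iff.mpr ⟨_, hw, h₀, h₃, h₅⟩)
    · exact Or.inr (eoContains_P5_1432_iff.mpr ⟨_, hw, h₀, h₄, h₅⟩)
  · have hr := hw.reverse
    have hrl : ∀ i < 4, G.edgeLabels (fun k => q (j + (4 - k))) i = G.edgeLabels q (j + (3 - i)) :=
      fun i hi => edgeLabels_reverse (q := fun k => q (j + k)) hi
    rcases lt_or_gt_of_ne h₁₂ with h₅ | h₅
    · refine Or.inr (eoContains_P5_1432_iff.mpr ⟨_, hr, ?_, ?_, ?_⟩) <;>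
        simp only [hrl 0 (by decide), hrl 1 (by decide), hrl 2 (by decide), hrl 3 (by decide)] <;>
        assumption
    · refine Or.inl (eoContains_P5_1342_iff.mpr ⟨_, hr, ?_, ?_, ?_⟩) <;>
        simp only [hrl 0 (by decide), hrl 1 (by decide), hrl 2 (by decide), hrl 3 (by decide)] <;>
        assumption

/-- Order the edges of a properly 2-coloured graph lexicographically, by their end of colour `0`
first: the edges at a vertex of colour `0` then form an interval. -/
lemma exists_closeVertex_of_coloring {m : ℕ} {H : SimpleGraph (Fin m)} (c : H.Coloring (Fin 2)) :
    ∃ K : EOGraph (Fin m), K.graph = H ∧ ∀ v, c v = 0 → CloseVertex K v := by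
  let key : Fin m → ℕ := fun v => if c v = 0 then v * m else v
  let lex : Sym2 (Fin m) → ℕ := Sym2.lift ⟨fun u v => key u + key v, fun _ _ => add_comm _ _⟩
  have hlex : ∀ {x y}, H.Adj x y → c x = 0 → lex s(x, y) = x * m + y := fun {x y} hxy hx => by
    simp [lex, key, hx, Ne.symm (hx ▸ c.valid hxy)]
  have hdiv : ∀ {x y}, H.Adj x y → c x = 0 → lex s(x, y) / m = x := fun {x y} hxy hx => by
    rw [hlex hxy hx, Nat.add_comm, Nat.add_mul_div_right _ _ (Fin.pos x),
      Nat.div_eq_of_lt y.isLt, zero_add]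
  have hleft : ∀ e ∈ H.edgeSet, ∃ x y, e = s(x, y) ∧ H.Adj x y ∧ c x = 0 := by
    rintro ⟨x, y⟩ hxy
    have hne := c.valid hxy
    by_cases hx : c x = 0
    · exact ⟨x, y, rfl, hxy, hx⟩
    · refine ⟨y, x, Sym2.eq_swap, hxy.symm, ?_⟩
      revert hx hne; generalize c x = a; generalize c y = b; decide +revert
  have hinj : ∀ e ∈ H.edgeSet, ∀ f ∈ H.edgeSet, (lex e : ℝ) = lex f → e = f := by
    intro e he f hf hef
    obtain ⟨x, y, rfl, hxy, hx⟩ := hleft e he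
    obtain ⟨x', y', rfl, hxy', hx'⟩ := hleft f hf
    rw [hlex hxy hx, hlex hxy' hx'] at hef
    have hef : (x : ℕ) * m + y = x' * m + y' := by exact_mod_cast hef
    obtain rfl : x = x' :=
      Fin.ext (by rw [← hdiv hxy hx, ← hdiv hxy' hx', hlex hxy hx, hlex hxy' hx', hef])
    rw [Fin.ext (Nat.add_left_cancel hef)]
  refine ⟨⟨H, fun e => lex e, hinj⟩, rfl, fun w hw e he f hf g hg hwe hwg hef hfg => ?_⟩
  obtain ⟨u, rfl⟩ := Sym2.mem_iff_exists.mp hwe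
  obtain ⟨u', rfl⟩ := Sym2.mem_iff_exists.mp hwg
  obtain ⟨x, y, rfl, hxy, hx⟩ := hleft f hf
  have h₁ : lex s(w, u) ≤ lex s(x, y) := by exact_mod_cast (show (lex _ : ℝ) ≤ lex _ from hef)
  have h₂ : lex s(x, y) ≤ lex s(w, u') := by exact_mod_cast (show (lex _ : ℝ) ≤ lex _ from hfg)
  replace h₁ := Nat.div_le_div_right (c := m) h₁
  replace h₂ := Nat.div_le_div_right (c := m) h₂
  rw [hdiv he hw, hdiv hxy hx] at h₁
  rw [hdiv hg hw, hdiv hxy hx] at h₂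
  obtain rfl : w = x := Fin.ext (le_antisymm h₁ h₂)
  exact Sym2.mem_mk_left _ _

lemma closeVertex_of_embedding {W : Type} [Fintype W] {K : EOGraph W} {φ : V → W}
    (hφ : Function.Injective φ)
    (hadj : ∀ a b, G.graph.Adj a b → K.graph.Adj (φ a) (φ b))
    (hord : ∀ e ∈ G.graph.edgeSet, ∀ f ∈ G.graph.edgeSet, G.label e < G.label f →
      K.label (e.map φ) < K.label (f.map φ))
    {w : V} (hw : CloseVertex K (φ w)) : CloseVertex G w := by
  have hE : ∀ e ∈ G.graph.edgeSet, e.map φ ∈ K.graph.edgeSet := fun e he =>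
    SimpleGraph.Hom.map_mem_edgeSet ⟨φ, hadj _ _⟩ he
  have hmono : ∀ e ∈ G.graph.edgeSet, ∀ f ∈ G.graph.edgeSet, G.label e ≤ G.label f →
      K.label (e.map φ) ≤ K.label (f.map φ) := fun e he f hf h => by
    rcases h.eq_or_lt with h | h
    · rw [G.inj e he f hf h]
    · exact (hord e he f hf h).le
  intro e he f hf g hg hwe hwg hef hfg
  obtain ⟨p, hp, hpw⟩ := Sym2.mem_map.mp (hw _ (hE e he) _ (hE f hf) _ (hE g hg)
    (Sym2.mem_map.mpr ⟨w, hwe, rfl⟩) (Sym2.mem_map.mpr ⟨w, hwg, rfl⟩)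
    (hmono e he f hf hef) (hmono f hf g hg hfg))
  exact hφ hpw ▸ hp

lemma exists_coloring_closeVertex (h : OrderChromAtMost G 2) :
    ∃ C : G.graph.Coloring (Fin 2), ∀ v, C v = 0 → CloseVertex G v := by
  obtain ⟨m, H, hH, hall⟩ := h
  obtain ⟨c⟩ := SimpleGraph.chromaticNumber_le_iff_colorable.mp hH
  obtain ⟨K, rfl, hK⟩ := exists_closeVertex_of_coloring c
  obtain ⟨φ, hφ, hadj, hord⟩ := hall K rfl
  exact ⟨c.comp ⟨φ, hadj _ _⟩, fun v hv => closeVertex_of_embedding hφ hadj hord (hK _ hv)⟩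

lemma exists_consecutive_of_not_of (P : Sym2 V → Prop) {e f : Sym2 V} (he : e ∈ G.graph.edgeSet)
    (hf : f ∈ G.graph.edgeSet) (hPe : ¬ P e) (hPf : P f) (hef : G.label e < G.label f) :
    ∃ p g, Consecutive G p g ∧ ¬ P p ∧ P g ∧ G.label e ≤ G.label p ∧ G.label g ≤ G.label f := by
  obtain ⟨g, ⟨hg, hPg, heg, hgf⟩, hgmin⟩ := Set.exists_min_image
    {g | g ∈ G.graph.edgeSet ∧ P g ∧ G.label e ≤ G.label g ∧ G.label g ≤ G.label f} G.label
    (Set.toFinite _) ⟨f, hf, hPf, hef.le, le_rfl⟩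
  have heg' : G.label e < G.label g :=
    heg.lt_of_ne fun h => hPe (G.inj e he g hg h ▸ hPg)
  obtain ⟨p, ⟨hp, hep, hpg⟩, hpmax⟩ := Set.exists_max_image
    {p | p ∈ G.graph.edgeSet ∧ G.label e ≤ G.label p ∧ G.label p < G.label g} G.label
    (Set.toFinite _) ⟨e, he, le_rfl, heg'⟩
  refine ⟨p, g, ⟨hp, hg, hpg, ?_⟩, fun hPp => ?_, hPg, hep, hgf⟩
  · rintro ⟨r, hr, hpr, hrg⟩
    linarith [hpmax r ⟨hr, hep.trans hpr.le, hrg⟩]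
  · linarith [hgmin p ⟨hp, hPp, hep, hpg.le.trans hgf⟩]

/-- Following the edge order from `e` on the `a₁`-side of a bridge `a₁a₂` to `f` on its
`a₂`-side, the first crossing happens between consecutive edges, which the bridge must link. -/
lemma ConsecutiveLinked.exists_mem_of_isBridge (hG : G.ConsecutiveLinked) {a₁ a₂ : V}
    (hbr : G.graph.IsBridge s(a₁, a₂)) {e f : Sym2 V} (he : e ∈ G.graph.edgeSet)
    (hf : f ∈ G.graph.edgeSet) (ha₁ : a₁ ∈ e) (ha₂ : a₂ ∉ e) {b : V} (hb : b ∈ f)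
    (hreach : (G.graph.deleteEdges {s(a₁, a₂)}).Reachable a₂ b) (hef : G.label e < G.label f)
    (hout : G.label s(a₁, a₂) < G.label e ∨ G.label f < G.label s(a₁, a₂)) :
    ∃ g ∈ G.graph.edgeSet, a₂ ∈ g ∧ G.label e < G.label g ∧ G.label g ≤ G.label f ∧
      G.label g < G.label s(a₁, a₂) := by
  set D := G.graph.deleteEdges {s(a₁, a₂)}
  have hspread : ∀ g ∈ G.graph.edgeSet, g ≠ s(a₁, a₂) → ∀ u ∈ g, ∀ v ∈ g,
      D.Reachable a₂ u → D.Reachable a₂ v := fun g hg hne u hu v hv h =>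
    h.trans (.of_mem_edgeSet (by simp [D, hg, hne]) hu hv)
  have hne : e ≠ s(a₁, a₂) := fun h => ha₂ (h ▸ Sym2.mem_mk_right _ _)
  obtain ⟨p, g, hpg, hPp, ⟨v, hvg, hv⟩, hep, hgf⟩ := exists_consecutive_of_not_of
    (fun g => ∃ v ∈ g, D.Reachable a₂ v) he hf
    (fun ⟨v, hve, hv⟩ => SimpleGraph.isBridge_iff.mp hbr (hspread e he hne v hve a₁ ha₁ hv).symm)
    ⟨b, hb, hreach⟩ hef
  have hlt : G.label e < G.label g := hep.trans_lt hpg.2.2.1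
  have hg : g ≠ s(a₁, a₂) := by rintro rfl; rcases hout with h | h <;> linarith
  have hall : ∀ u ∈ g, D.Reachable a₂ u := fun u hu => hspread g hpg.2.1 hg v hvg u hu hv
  rcases hG p g hpg with ⟨u, hup, hug⟩ | ⟨x, y, hxy, hxp, hyg, -, hgxy⟩
  · exact absurd ⟨u, hup, hall u hug⟩ hPp
  · have hbr' : s(x, y) = s(a₁, a₂) := by
      by_contra h
      exact hPp ⟨x, hxp, hspread _ hxy h y (Sym2.mem_mk_right _ _) x (Sym2.mem_mk_left _ _)
        (hall y hyg)⟩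
    rcases Sym2.eq_iff.mp hbr' with ⟨rfl, rfl⟩ | ⟨rfl, -⟩
    · exact ⟨g, hpg.2.1, hyg, hlt, hgf, hbr' ▸ hgxy⟩
    · exact absurd ⟨x, hxp, .rfl⟩ hPp

lemma ConsecutiveLinked.not_eoContains_P4_213 (hG : G.ConsecutiveLinked)
    (hac : G.graph.IsAcyclic) : ¬ EOContains G P4_213 := by
  rw [eoContains_P4_213_iff]
  rintro ⟨q, hq, h₁, h₀⟩
  obtain ⟨g, -, -, hg, -, hg'⟩ := hG.exists_mem_of_isBridge
    (SimpleGraph.isAcyclic_iff_forall_adj_isBridge.mp hac (hq.2 1 (by norm_num)))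
    (hq.mem_edgeSet (i := 0) (by norm_num)) (hq.mem_edgeSet (i := 2) (by norm_num))
    (Sym2.mem_mk_right _ _) (hq.notMem_edge (by norm_num) (by norm_num) (by norm_num) (by norm_num))
    (Sym2.mem_mk_left _ _) .rfl h₀ (Or.inl h₁)
  exact (hg.trans hg').not_gt h₁

/-- Both patterns give a path `q₀ … q₄` with `q₀q₁ < q₃q₄ < q₁q₂`. One of `q₁`, `q₂` is close. If
`q₁` is, the edge `q₃q₄`, lying between two edges at `q₁`, is at `q₁`; if `q₂` is, the bridge
`q₁q₂` yields an edge at `q₂` below `q₃q₄`, which is therefore at `q₂`. -/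
lemma ConsecutiveLinked.not_eoContains_P5 (hG : G.ConsecutiveLinked) (hac : G.graph.IsAcyclic)
    (C : G.graph.Coloring (Fin 2)) (hC : ∀ v, C v = 0 → CloseVertex G v) :
    ¬ EOContains G P5_1342 ∧ ¬ EOContains G P5_1432 := by
  suffices h : ∀ q, G.graph.IsPathSeq q 4 → G.edgeLabels q 0 < G.edgeLabels q 3 →
      G.edgeLabels q 3 < G.edgeLabels q 1 → False by
    rw [eoContains_P5_1342_iff, eoContains_P5_1432_iff]
    exact ⟨fun ⟨q, hq, h₀, h₁, _⟩ => h q hq h₀ h₁,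
      fun ⟨q, hq, h₀, h₁, h₂⟩ => h q hq h₀ (h₁.trans h₂)⟩
  intro q hq h₀ h₁
  simp only [edgeLabels, Nat.reduceAdd] at h₀ h₁
  by_cases hc₁ : C (q 1) = 0
  · exact hq.notMem_edge (i := 3) (k := 1) (by norm_num) (by norm_num) (by norm_num) (by norm_num)
      (hC _ hc₁ _ (hq.mem_edgeSet (i := 0) (by norm_num)) _ (hq.mem_edgeSet (i := 3) (by norm_num))
        _ (hq.mem_edgeSet (i := 1) (by norm_num)) (Sym2.mem_mk_right _ _) (Sym2.mem_mk_left _ _)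
        h₀.le h₁.le)
  have hc₂ : C (q 2) = 0 := by
    have := C.valid (hq.2 1 (by norm_num))
    revert hc₁ this; generalize C (q 1) = a; generalize C (q 2) = b; decide +revert
  have hreach : (G.graph.deleteEdges {s(q 1, q 2)}).Reachable (q 2) (q 3) :=
    SimpleGraph.Adj.reachable (by
      simp [hq.2 2 (by norm_num), hq.ne (i := 2) (j := 1), hq.ne (i := 3) (j := 1)])
  obtain ⟨g, hg, hq₂g, -, hgf, hg'⟩ := hG.exists_mem_of_isBridge
    (SimpleGraph.isAcyclic_iff_forall_adj_isBridge.mp hac (hq.2 1 (by norm_num)))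
    (hq.mem_edgeSet (i := 0) (by norm_num)) (hq.mem_edgeSet (i := 3) (by norm_num))
    (Sym2.mem_mk_right _ _) (hq.notMem_edge (by norm_num) (by norm_num) (by norm_num) (by norm_num))
    (Sym2.mem_mk_left _ _) hreach h₀ (Or.inr h₁)
  exact hq.notMem_edge (i := 3) (k := 2) (by norm_num) (by norm_num) (by norm_num) (by norm_num)
    (hC _ hc₂ g hg _ (hq.mem_edgeSet (i := 3) (by norm_num))
      _ (hq.mem_edgeSet (i := 1) (by norm_num)) hq₂g (Sym2.mem_mk_right _ _) hgf h₁.le)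

lemma edgeSet_nonempty_of_not_orderChromAtMost_one (h : ¬ OrderChromAtMost G 1) :
    G.graph.edgeSet.Nonempty := by
  refine Set.nonempty_iff_ne_empty.mpr fun hE => h ⟨Fintype.card V, ⊥,
    SimpleGraph.chromaticNumber_le_iff_colorable.mpr (SimpleGraph.colorable_one_iff.mpr rfl),
    fun K _ => ?_⟩
  have hG := Set.eq_empty_iff_forall_notMem.mp hE
  exact ⟨Fintype.equivFin V, (Fintype.equivFin V).injective,
    fun a b hab => absurd hab (hG s(a, b)), fun e he => absurd he (hG e)⟩

/-- A non-bridge edge `xy` of least label closes a cycle whose other edges are all larger. -/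
lemma exists_isPathSeq_of_not_isAcyclic (h : ¬ G.graph.IsAcyclic) :
    ∃ (x y : V) (a : ℕ → V) (n : ℕ), G.graph.Adj x y ∧ G.graph.IsPathSeq a n ∧ a 0 = x ∧
      a n = y ∧ n ≠ 1 ∧ ∀ i < n, G.label s(x, y) < G.label s(a i, a (i + 1)) := by
  classical
  simp only [SimpleGraph.isAcyclic_iff_forall_isBridge, not_forall] at h
  obtain ⟨e, he, hbr⟩ := h
  obtain ⟨⟨x, y⟩, ⟨hxy, hbr⟩, hmin⟩ := Set.exists_min_image
    {e | e ∈ G.graph.edgeSet ∧ ¬ G.graph.IsBridge e} G.label (Set.toFinite _) ⟨e, he, hbr⟩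
  have hxy : G.graph.Adj x y := hxy
  obtain ⟨p₀, hp₀⟩ : ∃ p : G.graph.Walk x y, s(x, y) ∉ p.edges := by
    simpa [SimpleGraph.isBridge_iff_forall_walk_mem_edges] using hbr
  set p := p₀.bypass
  have hp : p.IsPath := p₀.bypass_isPath
  have hpe : s(x, y) ∉ p.edges := fun h => hp₀ (p₀.edges_bypass_subset_edges h)
  have hcycle : (SimpleGraph.Walk.cons hxy.symm p).IsCycle :=
    (SimpleGraph.Walk.cons_isCycle_iff _ _).mpr ⟨hp, by rwa [Sym2.eq_swap]⟩
  refine ⟨x, y, p.getVert, p.length, hxy, hp.isPathSeq, p.getVert_zero, p.getVert_length,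
    fun h1 => hpe ((SimpleGraph.Walk.mk_mem_edges_iff_exists p).mpr
      ⟨0, by omega, by rw [p.getVert_zero, zero_add, ← h1, p.getVert_length]⟩), fun i hi => ?_⟩
  have hmem : s(p.getVert i, p.getVert (i + 1)) ∈ p.edges :=
    (SimpleGraph.Walk.mk_mem_edges_iff_exists p).mpr ⟨i, hi, rfl⟩
  refine (hmin _ ⟨p.edges_subset_edgeSet hmem, fun hb => hb.notMem_edges_of_isCycle hcycle
    (List.mem_cons_of_mem _ hmem)⟩).lt_of_ne fun heq => hpe ?_
  have heq' : s(x, y) = _ := G.inj _ hxy _ (p.edges_subset_edgeSet hmem) heq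
  rwa [heq']

lemma isAcyclic_of_not_eoContains_P4_213 (hcol : G.graph.Colorable 2)
    (h : ¬ EOContains G P4_213) : G.graph.IsAcyclic := by
  classical
  by_contra hcyc
  obtain ⟨x, y, a, n, hxy, hq, h₀, hn, hn1, habove⟩ := exists_isPathSeq_of_not_isAcyclic hcyc
  have hn0 : n ≠ 0 := by rintro rfl; exact hxy.ne (h₀ ▸ hn)
  have hx₁ : G.graph.Adj (a 1) x := h₀ ▸ (hq.2 0 (by omega)).symm
  have hy₁ : G.graph.Adj y (a (n - 1)) := by
    simpa [hn, show n - 1 + 1 = n by omega] using (hq.2 (n - 1) (by omega)).symm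
  have hn2 : n ≠ 2 := by
    rintro rfl
    exact hcol.cliqueFree (by norm_num : 2 < 3) {x, a 1, y}
      (SimpleGraph.is3Clique_triple_iff.mpr ⟨hx₁.symm, hxy, hy₁.symm⟩)
  let W := SimpleGraph.Walk.cons hx₁ (.cons hxy (.cons hy₁ .nil))
  have hW : W.IsPath := by
    simp only [W, SimpleGraph.Walk.cons_isPath_iff, SimpleGraph.Walk.support_cons,
      SimpleGraph.Walk.support_nil, List.mem_cons, List.not_mem_nil, or_false, not_or]
    rw [← h₀, ← hn]
    refine ⟨⟨⟨SimpleGraph.Walk.IsPath.nil, hq.ne ?_ ?_ ?_⟩, hq.ne ?_ ?_ ?_, hq.ne ?_ ?_ ?_⟩,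
      hq.ne ?_ ?_ ?_, hq.ne ?_ ?_ ?_, hq.ne ?_ ?_ ?_⟩ <;> omega
  refine h (eoContains_P4_213_of_hasValley hW.isPathSeq ⟨0, by simp [W], ?_, ?_⟩)
  · simpa [W, edgeLabels, h₀, Sym2.eq_swap] using habove 0 (by omega)
  · simpa [W, edgeLabels, hn, show n - 1 + 1 = n by omega, Sym2.eq_swap] using
      habove (n - 1) (by omega)

/-- Take a path from `e` to `f`. Its interior edges avoid `[e, f]`; one below `e` would give a
valley, and two or more, all above `f`, would give a valley or a hump. So a single interior edge
links `e` and `f`. -/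
lemma consecutiveLinked_of_connected (hconn : G.graph.Connected) (h₄ : ¬ EOContains G P4_213)
    (h₅ : ¬ EOContains G P5_1342) (h₅' : ¬ EOContains G P5_1432) : G.ConsecutiveLinked := by
  rintro e f ⟨he, hf, hef, hbetween⟩
  by_cases hadj : EdgesAdjacent e f
  · exact Or.inl hadj
  obtain ⟨n, q, hn, hq, rfl, rfl⟩ := hconn.exists_isPathSeq_of_not_edgesAdjacent he hf hadj
  have hl := (edgeLabels_injOn hq).mono (Set.Iic_subset_Iio.mpr (Nat.lt_succ_self (n + 1)))
  change G.edgeLabels q 0 < G.edgeLabels q (n + 1) at hef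
  have hout : ∀ i, 0 < i → i < n + 1 →
      G.edgeLabels q i < G.edgeLabels q 0 ∨ G.edgeLabels q (n + 1) < G.edgeLabels q i := by
    intro i hi0 hin
    by_contra! h
    exact hbetween ⟨_, hq.mem_edgeSet (by omega : i < n + 2),
      h.1.lt_of_ne (hl.ne (show 0 ≤ n + 1 by omega) (show i ≤ n + 1 by omega) (by omega)),
      h.2.lt_of_ne (hl.ne (show i ≤ n + 1 by omega) (show n + 1 ≤ n + 1 by omega) (by omega))⟩
  by_cases hlow : ∃ i, 0 < i ∧ i < n + 1 ∧ G.edgeLabels q i < G.edgeLabels q 0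
  · obtain ⟨i, hi0, hin, hi⟩ := hlow
    exact (h₄ (eoContains_P4_213_of_hasValley hq (hasValley_of_lt (hl.mono Set.Icc_subset_Iic_self)
      hi0 hin (by omega) hi (hi.trans hef)))).elim
  simp only [not_exists, not_and, not_lt] at hlow
  have hhigh : ∀ i, 0 < i → i < n + 1 →
      G.edgeLabels q 0 < G.edgeLabels q i ∧ G.edgeLabels q (n + 1) < G.edgeLabels q i :=
    fun i hi0 hin => have h := (hout i hi0 hin).resolve_left (hlow i hi0 hin).not_gt
      ⟨hef.trans h, h⟩
  rcases Nat.lt_or_ge n 2 with hn2 | hn2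
  · obtain rfl : n = 1 := by omega
    obtain ⟨h₁, h₂⟩ := hhigh 1 (by omega) (by omega)
    exact Or.inr ⟨q 1, q 2, hq.mem_edgeSet (by omega), Sym2.mem_mk_right _ _,
      Sym2.mem_mk_left _ _, h₁, h₂⟩
  · rcases hasValley_or_hasHump hl (by omega) hhigh with h | h
    · exact absurd (eoContains_P4_213_of_hasValley hq h) h₄
    · rcases eoContains_P5_of_hasHump hq h with h | h
      exacts [absurd h h₅, absurd h h₅']

end EOGraph

/-- An edge-ordered graph of order chromatic number 2 is a semi-caterpillar iff
it is connected and contains none of `P₄^{213}`, `P₅^{1342}`, `P₅^{1432}`. -/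
theorem stmt_8 {V : Type} [Fintype V] (G : EOGraph V) (h2 : HasOrderChrom2 G) :
    IsSemiCaterpillar G ↔
      G.graph.Connected ∧ ¬ EOContains G P4_213 ∧ ¬ EOContains G P5_1342 ∧
        ¬ EOContains G P5_1432 := by
  obtain ⟨C, hC⟩ := EOGraph.exists_coloring_closeVertex h2.1
  constructor
  · rintro ⟨htree, -, hG⟩
    have hG : G.ConsecutiveLinked := hG
    exact ⟨htree.connected, hG.not_eoContains_P4_213 htree.isAcyclic,
      hG.not_eoContains_P5 htree.isAcyclic C hC⟩
  · rintro ⟨hconn, h₄, h₅, h₅'⟩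
    exact ⟨⟨hconn, EOGraph.isAcyclic_of_not_eoContains_P4_213 ⟨C⟩ h₄⟩,
      EOGraph.edgeSet_nonempty_of_not_orderChromAtMost_one h2.2,
      EOGraph.consecutiveLinked_of_connected hconn h₄ h₅ h₅'⟩
end
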